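/- arXiv:2003.12802 — 10 statements merged into one kernel-verified Lean document; each statement's English description precedes it below -/
import Mathlib

section
/- Let G be a finite group in which every element g satisfies g^3 = 1. Then the commutator subgroup ⁅G,G⁆ of G is commutative (hence, since all its elements also satisfy x^3 = 1, it is an elementary abelian 3-group). -/
/-!
In exponent 3, `(y * x) ^ 3 = 1` says that `x` commutes with its conjugates, so the normal
closure `N` of any `x` is abelian. Written additively, conjugation makes `N` a representation
`ρ` of `G` with `ρ y + ρ y⁻¹ + 1 = 0`; in `End N` this forces `3 = 0` and makes the elements
`ρ y - 1` pairwise anticommute, whence `(ρ g - 1) (ρ h - 1) (ρ k - 1) = 0`, i.e.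
`⁅g, ⁅h, ⁅k, x⁆⁆⁆ = 1`. Hence every `⁅t, ⁅a, b⁆⁆` is central, so `t ↦ ⁅t, ⁅a, b⁆⁆` is a
homomorphism into an abelian group and kills `⁅c, d⁆`.
-/

open scoped commutatorElement IsMulCommutative

namespace MonoidHom

variable {G R : Type*} [Group G] [Ring R] (ρ : G →* R) (hρ : ∀ y, ρ y + ρ y⁻¹ + 1 = 0)
include hρ

lemma three_eq_zero_of_map_add_map_inv_add_one : (3 : R) = 0 := by
  have h := hρ 1
  rw [inv_one, map_one] at h
  rw [← h]; norm_num

lemma map_inv_eq_neg_one_sub (y : G) : ρ y⁻¹ = -1 - ρ y := by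
  rw [← sub_eq_zero, ← hρ y]; abel

lemma sub_one_mul_sub_one_anticomm (a b : G) :
    (ρ a - 1) * (ρ b - 1) = -((ρ b - 1) * (ρ a - 1)) := by
  have hab : (ρ a - 1) * (ρ b - 1) + (ρ b - 1) * (ρ a - 1) =
      (ρ a * ρ b + (-1 - ρ b) * (-1 - ρ a) + 1) - 3 * (ρ a + ρ b) := by noncomm_ring
  rw [← ρ.map_inv_eq_neg_one_sub hρ, ← ρ.map_inv_eq_neg_one_sub hρ,
    ← map_mul, ← map_mul, ← mul_inv_rev, hρ, ρ.three_eq_zero_of_map_add_map_inv_add_one hρ,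
    zero_mul, sub_zero] at hab
  exact eq_neg_of_add_eq_zero_left hab

lemma sub_one_mul_sub_one_mul_sub_one_eq_zero (g h k : G) :
    (ρ g - 1) * (ρ h - 1) * (ρ k - 1) = 0 := by
  have hgh : ρ (g * h) - 1 = (ρ g - 1) + (ρ h - 1) + (ρ g - 1) * (ρ h - 1) := by
    rw [map_mul]; noncomm_ring
  have hghk := ρ.sub_one_mul_sub_one_anticomm hρ (g * h) k
  have hgk := ρ.sub_one_mul_sub_one_anticomm hρ g k
  have hhk := ρ.sub_one_mul_sub_one_anticomm hρ h k
  rw [hgh] at hghk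
  set u := ρ g - 1
  set v := ρ h - 1
  set w := ρ k - 1
  have hneg : u * v * w = -(u * v * w) := by
    calc u * v * w = (u + v + u * v) * w - u * w - v * w := by noncomm_ring
      _ = -(w * u * v) := by rw [hghk, hgk, hhk]; noncomm_ring
      _ = -(u * v * w) := by rw [mul_assoc u, hhk, mul_neg, ← mul_assoc, hgk]; noncomm_ring
  calc u * v * w = 3 * (u * v * w) - (u * v * w + u * v * w) := by noncomm_ring
    _ = 0 := by
      rw [ρ.three_eq_zero_of_map_add_map_inv_add_one hρ, add_eq_zero_iff_eq_neg.mpr hneg,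
        zero_mul, sub_zero]

end MonoidHom

section ConjRepresentation

variable {G : Type*} [Group G] (N : Subgroup G) [N.Normal] [IsMulCommutative N]

def conjRepresentation : Representation ℤ G (Additive N) :=
  (Representation.ofMulDistribMulAction (ConjAct G) N).comp ConjAct.toConjAct.toMonoidHom

lemma coe_toMul_conjRepresentation_apply (g : G) (v : Additive N) :
    ((conjRepresentation N g v).toMul : G) = g * v.toMul * g⁻¹ := rfl

lemma coe_toMul_conjRepresentation_sub_one_apply (g : G) (v : Additive N) :
    ((conjRepresentation N g - 1) v).toMul = ⁅g, (v.toMul : G)⁆ := by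
  rw [LinearMap.sub_apply, toMul_sub, Subgroup.coe_div, coe_toMul_conjRepresentation_apply,
    Module.End.one_apply, commutatorElement_def, div_eq_mul_inv]

end ConjRepresentation

section ExponentThree

variable {G : Type*} [Group G] (h3 : ∀ g : G, g ^ 3 = 1)
include h3

lemma inv_mul_inv_self_of_pow_three (y : G) : y⁻¹ * y⁻¹ = y := by
  rw [← mul_inv_rev, inv_eq_iff_mul_eq_one, ← pow_three', h3]

lemma conj_mul_conj_inv_mul_self (y x : G) : y * x * y⁻¹ * (y⁻¹ * x * y) * x = 1 := by
  calc y * x * y⁻¹ * (y⁻¹ * x * y) * x = y * x * (y⁻¹ * y⁻¹) * x * y * x := by group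
    _ = (y * x) ^ 3 := by rw [inv_mul_inv_self_of_pow_three h3, pow_three]; group
    _ = 1 := h3 _

lemma commute_conj_self (y x : G) : Commute x (y * x * y⁻¹) := by
  have hx : ∀ z : G, z * x * z⁻¹ * (z⁻¹ * x * z) = x⁻¹ := fun z =>
    mul_eq_one_iff_eq_inv.mp (conj_mul_conj_inv_mul_self h3 z x)
  have hcomm : Commute (y * x * y⁻¹) (y⁻¹ * x * y) := by
    have := hx y⁻¹
    rw [inv_inv] at this
    exact (hx y).trans this.symm
  have hy : y⁻¹ * x * y = y * (y * x * y⁻¹) * y⁻¹ := by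
    calc y⁻¹ * x * y = y⁻¹⁻¹ * y⁻¹⁻¹ * x * (y⁻¹⁻¹ * y⁻¹⁻¹)⁻¹ := by
          rw [inv_mul_inv_self_of_pow_three h3, inv_inv]
      _ = y * (y * x * y⁻¹) * y⁻¹ := by group
  rwa [hy, Commute.conj_iff] at hcomm

lemma commute_conj_conj (x g h : G) : Commute (g * x * g⁻¹) (h * x * h⁻¹) := by
  have h' : h * x * h⁻¹ = g * ((g⁻¹ * h) * x * (g⁻¹ * h)⁻¹) * g⁻¹ := by group
  rw [h', Commute.conj_iff]
  exact commute_conj_self h3 _ x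

lemma isMulCommutative_normalClosure_singleton (x : G) :
    IsMulCommutative (Subgroup.normalClosure {x}) := by
  refine Subgroup.isMulCommutative_closure ?_
  simp only [Group.mem_conjugatesOfSet_iff, Set.mem_singleton_iff, exists_eq_left, isConj_iff]
  rintro _ ⟨g, rfl⟩ _ ⟨h, rfl⟩
  exact commute_conj_conj h3 x g h

lemma conjRepresentation_add_inv_add_one (N : Subgroup G) [N.Normal] [IsMulCommutative N]
    (y : G) :
    conjRepresentation N y + conjRepresentation N y⁻¹ + 1 = 0 := by
  ext v
  simp only [LinearMap.add_apply, Module.End.one_apply, LinearMap.zero_apply, toMul_add,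
    toMul_zero, Subgroup.coe_mul, Subgroup.coe_one, coe_toMul_conjRepresentation_apply, inv_inv]
  exact conj_mul_conj_inv_mul_self h3 y _

lemma commutatorElement_commutatorElement_commutatorElement_eq_one (g h k x : G) :
    ⁅g, ⁅h, ⁅k, x⁆⁆⁆ = 1 := by
  have := isMulCommutative_normalClosure_singleton h3 x
  set N := Subgroup.normalClosure ({x} : Set G)
  let ρ := conjRepresentation N
  let v : Additive N := .ofMul ⟨x, Subgroup.subset_normalClosure rfl⟩
  have hv : ((ρ g - 1) * (ρ h - 1) * (ρ k - 1)) v = 0 := by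
    rw [ρ.sub_one_mul_sub_one_mul_sub_one_eq_zero (conjRepresentation_add_inv_add_one h3 N)]
    rfl
  have := congrArg (fun w : Additive N => (w.toMul : G)) hv
  rwa [Module.End.mul_apply, Module.End.mul_apply, coe_toMul_conjRepresentation_sub_one_apply,
    coe_toMul_conjRepresentation_sub_one_apply, coe_toMul_conjRepresentation_sub_one_apply] at this

end ExponentThree

lemma commutatorElement_commutatorElement_eq_one_of_forall_mem_center {G : Type*} [Group G]
    {w : G} (hw : ∀ t : G, ⁅t, w⁆ ∈ Subgroup.center G) (c d : G) : ⁅⁅c, d⁆, w⁆ = 1 := by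
  let φ : G →* G := MonoidHom.mk' (fun t : G => ⁅t, w⁆) fun a b => by
    calc ⁅a * b, w⁆ = a * ⁅b, w⁆ * a⁻¹ * ⁅a, w⁆ := by simp only [commutatorElement_def]; group
      _ = ⁅a, w⁆ * ⁅b, w⁆ := by
        rw [Subgroup.mem_center_iff.mp (hw b) a, mul_inv_cancel_right,
          Subgroup.mem_center_iff.mp (hw b)]
  change φ ⁅c, d⁆ = 1
  rw [map_commutatorElement, commutatorElement_eq_one_iff_commute]
  exact (Subgroup.mem_center_iff.mp (hw d) (φ c))

lemma commute_commutatorElement_commutatorElement {G : Type*} [Group G]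
    (h3 : ∀ g : G, g ^ 3 = 1) (a b c d : G) : Commute ⁅a, b⁆ ⁅c, d⁆ := by
  refine commutatorElement_eq_one_iff_commute.mp
    (commutatorElement_commutatorElement_eq_one_of_forall_mem_center (fun t => ?_) a b)
  exact Subgroup.mem_center_iff.mpr fun s => (commutatorElement_eq_one_iff_commute.mp
    (commutatorElement_commutatorElement_commutatorElement_eq_one h3 s t c d)).eq

theorem exponent_three_commutator_commutative_general
    (G : Type*) [Group G] (h3 : ∀ g : G, g ^ 3 = 1) :
    ∀ x y : ↥(commutator G), x * y = y * x := by
  have : IsMulCommutative (commutator G) := by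
    rw [commutator_eq_closure]
    refine Subgroup.isMulCommutative_closure ?_
    rintro _ ⟨a, b, rfl⟩ _ ⟨c, d, rfl⟩
    exact commute_commutatorElement_commutatorElement h3 a b c d
  exact mul_comm

/-- Let `G` be a finite group in which every element `g` satisfies `g ^ 3 = 1`. Then the
commutator subgroup `⁅G,G⁆` of `G` is commutative. -/
theorem exponent_three_commutator_commutative
    (G : Type*) [Group G] [Finite G] (h3 : ∀ g : G, g ^ 3 = 1) :
    ∀ x y : ↥(commutator G), x * y = y * x :=
  exponent_three_commutator_commutative_general G h3
end

section
/- Let p be a prime, n ≥ 1, and let G be a commutative subgroup of GL_n(ZMod p). Regarding elements of G as n×n matrices over ZMod p, the following are equivalent: (1) for every g ∈ G, 1 + g + g^2 + ⋯ + g^{p−1} = 0; (2) for every g ∈ G, (g − 1)^{p−1} = 0; (3) for all g₁, …, g_{p−1} ∈ G, (g₁ − 1)(g₂ − 1)⋯(g_{p−1} − 1) = 0; (4) for every subset X ⊆ G whose generated subgroup is all of G, and all g₁, …, g_{p−1} ∈ X, (g₁ − 1)(g₂ − 1)⋯(g_{p−1} − 1) = 0. -/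
/-!
For `(2) ⇒ (3)` work in the commutative `ZMod p`-algebra generated by `G`, put `m = p - 1`, and
for `x₁, …, x_m ∈ G` look at the `m`-th forward difference in `k` of `f k = ∏ i, (x i ^ k - 1)`.
Expanding the product, `f` is a signed sum of `k ↦ z ^ k` over subset products `z ∈ G`, so the
difference is a signed sum of terms `(z - 1) ^ m = 0`. On the other hand, modulo `J ^ (m + 1)`,
where `J` is spanned by the `x - 1`, `f k ≡ k ^ m ∏ i, (x i - 1)`, whose `m`-th difference is
`m! ∏ i, (x i - 1)`. Wilson's theorem makes `m!` a unit, so `J ^ m ≤ J ^ (m + 1)`. Restricted to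
the submonoid generated by the `x i`, `J` is finitely generated by nilpotents, hence nilpotent,
so `J ^ m = 0`.
`(1) ⇔ (2)` because `∑ i < p, x ^ i = (x - 1) ^ (p - 1)` in characteristic `p`.
-/

open Finset fwdDiff
open scoped Nat

theorem fwdDiff_iter_mem {M G S : Type*} [AddCommMonoid M] [AddCommGroup G] [SetLike S G]
    [AddSubgroupClass S G] {J : S} {f : M → G} (hf : ∀ y, f y ∈ J) (h : M) (n : ℕ) (y : M) :
    Δ_[h] ^[n] f y ∈ J := by
  induction n generalizing f with
  | zero => exact hf y
  | succ n ih =>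
    rw [Function.iterate_succ_apply]
    exact ih fun y => sub_mem (hf _) (hf y)

theorem fwdDiff_iter_sub {M G : Type*} [AddCommMonoid M] [AddCommGroup G] (h : M)
    (f g : M → G) (n : ℕ) : Δ_[h] ^[n] (f - g) = Δ_[h] ^[n] f - Δ_[h] ^[n] g := by
  rw [sub_eq_add_neg, fwdDiff_iter_add, ← neg_one_zsmul, fwdDiff_iter_const_smul, neg_one_zsmul,
    ← sub_eq_add_neg]

theorem fwdDiff_iter_pow_right_apply {R : Type*} [Ring R] (z : R) (n k : ℕ) :
    Δ_[1] ^[n] (fun k : ℕ => z ^ k) k = (z - 1) ^ n * z ^ k := by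
  induction n generalizing k with
  | zero => simp
  | succ n ih =>
    rw [Function.iterate_succ_apply', fwdDiff, ih, ih, ← mul_sub, pow_succ', ← sub_one_mul,
      pow_succ, mul_assoc]

theorem fwdDiff_iter_natCast_pow_self {R : Type*} [CommRing R] (n y : ℕ) :
    Δ_[1] ^[n] (fun k : ℕ => (k : R) ^ n) y = n ! := by
  have h := congr_fun (fwdDiff_iter_eq_factorial (R := R) (n := n)) y
  rw [fwdDiff_iter_eq_sum_shift] at h ⊢
  simpa using h

namespace Ideal

variable {R : Type*} [CommSemiring R]

theorem prod_mem_pow_card {ι : Type*} [Fintype ι] {I : Ideal R} {x : ι → R}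
    (hx : ∀ i, x i ∈ I) : ∏ i, x i ∈ I ^ Fintype.card ι := by
  simpa only [prod_const, card_univ] using
    prod_mem_prod (s := univ) (I := fun _ => I) fun i _ => hx i

theorem pow_le_pow_add_of_pow_le_pow_succ {I : Ideal R} {m : ℕ} (h : I ^ m ≤ I ^ (m + 1)) :
    ∀ k, I ^ m ≤ I ^ (m + k)
  | 0 => le_rfl
  | k + 1 => calc
      I ^ m ≤ I ^ (m + 1) := h
      _ = I ^ m * I := pow_succ I m
      _ ≤ I ^ (m + k) * I := mul_mono_left (pow_le_pow_add_of_pow_le_pow_succ h k)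
      _ = I ^ (m + (k + 1)) := (pow_succ I (m + k)).symm

end Ideal

section CommRing

variable {A : Type*} [CommRing A]

theorem prod_pow_sub_one_sub_mem_pow {ι : Type*} [Fintype ι] (J : Ideal A) {x : ι → A}
    (hx : ∀ i, x i - 1 ∈ J) (k : ℕ) :
    ∏ i, (x i ^ k - 1) - (k : A) ^ Fintype.card ι * ∏ i, (x i - 1) ∈
      J ^ (Fintype.card ι + 1) := by
  have hgeom : ∀ i, x i ^ k - 1 = (∑ j ∈ range k, x i ^ j) * (x i - 1) :=
    fun i => (geom_sum_mul _ _).symm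
  have hsum : ∏ i, ∑ j ∈ range k, x i ^ j - (k : A) ^ Fintype.card ι ∈ J := by
    have hx1 : ∀ i, Ideal.Quotient.mk J (x i) = 1 := fun i => by
      simpa using Ideal.Quotient.eq.mpr (hx i)
    rw [← Ideal.Quotient.eq]
    simp [hx1]
  rw [prod_congr rfl fun i _ => hgeom i, prod_mul_distrib, ← sub_mul, pow_succ']
  exact Ideal.mul_mem_mul hsum (Ideal.prod_mem_pow_card hx)

theorem factorial_mul_prod_sub_one_mem_pow {ι : Type*} [Fintype ι] [DecidableEq ι] (J : Ideal A)
    {x : ι → A} (hxJ : ∀ i, x i - 1 ∈ J)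
    (hx : ∀ s : Finset ι, (∏ i ∈ s, x i - 1) ^ Fintype.card ι = 0) :
    (Fintype.card ι)! * ∏ i, (x i - 1) ∈ J ^ (Fintype.card ι + 1) := by
  set m := Fintype.card ι
  have hexpand : (fun k : ℕ => ∏ i, (x i ^ k - 1)) =
      ∑ t ∈ univ.powerset, ((-1) ^ #t : A) • fun k : ℕ => (∏ i ∈ univ \ t, x i) ^ k := by
    ext k
    simp [prod_sub, prod_pow]
  have hf : Δ_[1] ^[m] (fun k : ℕ => ∏ i, (x i ^ k - 1)) 0 = 0 := by
    rw [hexpand, fwdDiff_iter_finsetSum]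
    simp [fwdDiff_iter_pow_right_apply, hx]
  have hg : Δ_[1] ^[m] ((∏ i, (x i - 1)) • fun k : ℕ => (k : A) ^ m) 0 =
      m ! * ∏ i, (x i - 1) := by
    rw [fwdDiff_iter_const_smul, Pi.smul_apply, fwdDiff_iter_natCast_pow_self, smul_eq_mul,
      mul_comm]
  rw [← hg, ← sub_zero (Δ_[1] ^[m] _ 0), ← hf, ← Pi.sub_apply, ← fwdDiff_iter_sub]
  refine fwdDiff_iter_mem (fun k => ?_) _ _ _
  rw [← neg_mem_iff, Pi.sub_apply, neg_sub, Pi.smul_apply, smul_eq_mul, mul_comm]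
  exact prod_pow_sub_one_sub_mem_pow J hxJ k

theorem span_sub_one_pow_le_pow_succ (M : Submonoid A) {m : ℕ} (hm : IsUnit (m ! : A))
    (hM : ∀ x ∈ M, (x - 1) ^ m = 0) :
    Ideal.span ((· - 1) '' (M : Set A)) ^ m ≤ Ideal.span ((· - 1) '' (M : Set A)) ^ (m + 1) := by
  classical
  rw [Ideal.span, Submodule.span_pow, Submodule.span_le]
  intro a ha
  obtain ⟨u, rfl⟩ := Set.mem_pow.mp ha
  choose x hxM hxu using fun i => (u i).2
  have hpol := factorial_mul_prod_sub_one_mem_pow (Ideal.span ((· - 1) '' (M : Set A)))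
    (fun i => Ideal.subset_span ⟨x i, hxM i, rfl⟩)
    fun s => by simpa only [Fintype.card_fin] using hM _ (M.prod_mem fun i _ => hxM i)
  rw [Fintype.card_fin, Ideal.unit_mul_mem_iff_mem _ hm] at hpol
  simpa [List.prod_ofFn, hxu] using hpol

theorem span_sub_one_closure_le (s : Set A) :
    Ideal.span ((· - 1) '' (Submonoid.closure s : Set A)) ≤ Ideal.span ((· - 1) '' s) := by
  rw [Ideal.span_le]
  rintro _ ⟨x, hx, rfl⟩
  induction hx using Submonoid.closure_induction with
  | mem x hx => exact Ideal.subset_span ⟨x, hx, rfl⟩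
  | one => simp
  | mul x y _ _ hx hy =>
    show x * y - 1 ∈ Ideal.span _
    rw [show x * y - 1 = (x - 1) * y + (y - 1) by ring]
    exact add_mem (Ideal.mul_mem_right _ _ hx) hy

theorem prod_sub_one_eq_zero_of_pow_sub_one_eq_zero (M : Submonoid A) {m : ℕ}
    (hm : IsUnit (m ! : A)) (hM : ∀ x ∈ M, (x - 1) ^ m = 0) (x : Fin m → A)
    (hx : ∀ i, x i ∈ M) : ∏ i, (x i - 1) = 0 := by
  set M' := Submonoid.closure (Set.range x)
  have hM' : ∀ y ∈ M', (y - 1) ^ m = 0 := fun y hy =>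
    hM y (Submonoid.closure_le.mpr (Set.range_subset_iff.mpr hx) hy)
  set I := Ideal.span ((· - 1) '' (M' : Set A))
  have hI : I = Ideal.span ((· - 1) '' Set.range x) :=
    (span_sub_one_closure_le _).antisymm
      (Ideal.span_mono (Set.image_mono Submonoid.subset_closure))
  obtain ⟨k, hk⟩ : IsNilpotent I := by
    rw [hI, Ideal.FG.isNilpotent_iff_le_nilradical
      (Submodule.fg_span ((Set.finite_range x).image _)), Ideal.span_le]
    rintro _ ⟨_, ⟨i, rfl⟩, rfl⟩
    exact ⟨m, hM' _ (Submonoid.subset_closure ⟨i, rfl⟩)⟩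
  have hprod : ∏ i, (x i - 1) ∈ I ^ m := by
    simpa using Ideal.prod_mem_pow_card (I := I)
      fun i => Ideal.subset_span ⟨x i, Submonoid.subset_closure ⟨i, rfl⟩, rfl⟩
  have hchain :=
    Ideal.pow_le_pow_add_of_pow_le_pow_succ (span_sub_one_pow_le_pow_succ M' hm hM') k
  have hzero := Ideal.pow_le_pow_right (Nat.le_add_left k m) (hchain hprod)
  rwa [hk, Ideal.zero_eq_bot, Ideal.mem_bot] at hzero

end CommRing

open scoped IsMulCommutative in
theorem list_prod_sub_one_eq_zero_of_pow_sub_one_eq_zero {K R : Type*} [CommRing K] [Ring R]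
    [Algebra K R] (M : Submonoid R) (hcomm : ∀ a ∈ M, ∀ b ∈ M, a * b = b * a) {m : ℕ}
    (hm : IsUnit (m ! : K)) (hM : ∀ x ∈ M, (x - 1) ^ m = 0) (x : Fin m → R)
    (hx : ∀ i, x i ∈ M) : (List.ofFn fun i => x i - 1).prod = 0 := by
  have := Algebra.isMulCommutative_adjoin K hcomm
  set B := Algebra.adjoin K (M : Set R)
  have hB := prod_sub_one_eq_zero_of_pow_sub_one_eq_zero (M.comap B.val)
    (by simpa using hm.map (algebraMap K B)) (fun y hy => Subtype.ext (by simpa using hM _ hy))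
    (fun i => ⟨x i, Algebra.subset_adjoin (hx i)⟩) hx
  rw [← List.prod_ofFn] at hB
  simpa [map_list_prod, List.map_ofFn, Function.comp_def] using congrArg B.val hB

theorem geom_sum_range_prime_eq_sub_one_pow {p : ℕ} [Fact p.Prime] {R : Type*} [Ring R]
    [Algebra (ZMod p) R] (x : R) : ∑ i ∈ range p, x ^ i = (x - 1) ^ (p - 1) := by
  open Polynomial in
  have hX : ∑ i ∈ range p, (X : (ZMod p)[X]) ^ i = (X - 1) ^ (p - 1) := by
    refine mul_right_cancel₀ (by simpa using X_sub_C_ne_zero (1 : ZMod p)) ?_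
    rw [geom_sum_mul, ← pow_succ, Nat.sub_add_cancel (Fact.out : p.Prime).one_le, sub_pow_char,
      one_pow]
  simpa using congrArg (Polynomial.aeval x) hX

theorem abelian_subgroup_GL_tfae_general
    (p : ℕ) (hp : p.Prime) (n : ℕ)
    (G : Subgroup (GL (Fin n) (ZMod p)))
    (hcomm : ∀ a ∈ G, ∀ b ∈ G, a * b = b * a) :
    List.TFAE
      [∀ g ∈ G, ∑ i ∈ Finset.range p, ((g : Matrix (Fin n) (Fin n) (ZMod p)) ^ i) = 0,
       ∀ g ∈ G, ((g : Matrix (Fin n) (Fin n) (ZMod p)) - 1) ^ (p - 1) = 0,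
       ∀ g : Fin (p - 1) → GL (Fin n) (ZMod p), (∀ i, g i ∈ G) →
         (List.ofFn fun i => ((g i : Matrix (Fin n) (Fin n) (ZMod p)) - 1)).prod = 0,
       ∀ X : Set (GL (Fin n) (ZMod p)), Subgroup.closure X = G →
         ∀ g : Fin (p - 1) → GL (Fin n) (ZMod p), (∀ i, g i ∈ X) →
           (List.ofFn fun i => ((g i : Matrix (Fin n) (Fin n) (ZMod p)) - 1)).prod = 0] := by
  have := Fact.mk hp
  tfae_have 1 ↔ 2 := by simp only [geom_sum_range_prime_eq_sub_one_pow]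
  tfae_have 2 → 3 := by
    intro h2 g hg
    refine list_prod_sub_one_eq_zero_of_pow_sub_one_eq_zero (K := ZMod p)
      (G.toSubmonoid.map (Units.coeHom _)) ?_ ?_ ?_ (fun i => g i) fun i => ⟨g i, hg i, rfl⟩
    · rintro _ ⟨a, ha, rfl⟩ _ ⟨b, hb, rfl⟩
      simpa using congrArg Units.val (hcomm a ha b hb)
    · rw [ZMod.wilsons_lemma]
      exact isUnit_one.neg
    · rintro _ ⟨g, hg, rfl⟩
      exact h2 g hg
  tfae_have 3 → 2 := fun h3 g hg => by
    simpa [List.ofFn_const, List.prod_replicate] using h3 (fun _ => g) fun _ => hg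
  tfae_have 3 → 4 := fun h3 X hX g hg => h3 g fun i => hX ▸ Subgroup.subset_closure (hg i)
  tfae_have 4 → 3 := fun h4 => h4 G (Subgroup.closure_eq G)
  tfae_finish

/-- Let `p` be a prime, `n ≥ 1`, and `G` a commutative subgroup of `GL n (ZMod p)`.
Regarding elements of `G` as `n × n` matrices over `ZMod p`, the following are equivalent:
(1) `1 + g + g² + ⋯ + g^(p-1) = 0` for every `g ∈ G`;
(2) `(g - 1)^(p-1) = 0` for every `g ∈ G`;
(3) `(g₁-1)(g₂-1)⋯(g_(p-1)-1) = 0` for all `g₁, …, g_(p-1) ∈ G`;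
(4) the same for all `g₁, …, g_(p-1)` taken from any generating set `X` of `G`. -/
theorem abelian_subgroup_GL_tfae
    (p : ℕ) (hp : p.Prime) (n : ℕ) (hn : 1 ≤ n)
    (G : Subgroup (GL (Fin n) (ZMod p)))
    (hcomm : ∀ a ∈ G, ∀ b ∈ G, a * b = b * a) :
    List.TFAE
      [∀ g ∈ G, ∑ i ∈ Finset.range p, ((g : Matrix (Fin n) (Fin n) (ZMod p)) ^ i) = 0,
       ∀ g ∈ G, ((g : Matrix (Fin n) (Fin n) (ZMod p)) - 1) ^ (p - 1) = 0,
       ∀ g : Fin (p - 1) → GL (Fin n) (ZMod p), (∀ i, g i ∈ G) →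
         (List.ofFn fun i => ((g i : Matrix (Fin n) (Fin n) (ZMod p)) - 1)).prod = 0,
       ∀ X : Set (GL (Fin n) (ZMod p)), Subgroup.closure X = G →
         ∀ g : Fin (p - 1) → GL (Fin n) (ZMod p), (∀ i, g i ∈ X) →
           (List.ofFn fun i => ((g i : Matrix (Fin n) (Fin n) (ZMod p)) - 1)).prod = 0] :=
  abelian_subgroup_GL_tfae_general p hp n G hcomm
end

section
/- Let p be a prime, n ≥ 1, G a commutative subgroup of GL_n(ZMod p), r an integer with 1 ≤ r ≤ p − 1, and M an n×n matrix over ZMod p. If (g − 1)^r * M = 0 for all g ∈ G, then (g − 1)^{r−1} * (h − 1) * M = 0 for all g, h ∈ G; consequently (g₁ − 1)(g₂ − 1)⋯(g_r − 1) * M = 0 for all g₁, …, g_r ∈ G. -/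
/-!
For commuting `g, h` the map `t ↦ (g hᵗ - 1)ʳ M` is a polynomial in `t ∈ 𝔽_p` of degree `< p`:
expand `hᵗ = ∑ₖ (t choose k) (h - 1)ᵏ`, where only `k < r ≤ p - 1` contribute. It vanishes at
every `t`, so all its coefficients vanish. The coefficient of `t` is `r g (g - 1)ʳ⁻¹ L M`, where
`L = (h - 1)(1 + (h - 1) u)` is a truncated logarithm of `h`. In the commutative algebra generated
by `g` and `h`, taken modulo the annihilator of `M`, the factors `r`, `g` and `1 + (h - 1) u` are
units, which leaves `(g - 1)ʳ⁻¹ (h - 1) M = 0`. The statement about products of `r` factors follows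
by induction on `r`, replacing `M` with `(g_r - 1) M`.
-/

open Polynomial Finset
open scoped Nat

theorem sum_coeff_smul_eq_zero_of_forall_sum_eval_smul_eq_zero {K V ι : Type*} [Field K]
    [Fintype K] [AddCommGroup V] [Module K V] (s : Finset ι) (P : ι → K[X]) (v : ι → V)
    (hdeg : ∀ i ∈ s, (P i).natDegree < Fintype.card K)
    (heval : ∀ a : K, ∑ i ∈ s, (P i).eval a • v i = 0) (d : ℕ) :
    ∑ i ∈ s, (P i).coeff d • v i = 0 := by
  refine (Module.forall_dual_apply_eq_zero_iff K _).1 fun f => ?_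
  set Q : K[X] := ∑ i ∈ s, C (f (v i)) * P i
  have hQ : Q = 0 := by
    refine eq_zero_of_natDegree_lt_card_of_eval_eq_zero Q Function.injective_id (fun a => ?_) ?_
    · simpa [Q, eval_finsetSum, mul_comm] using congrArg f (heval a)
    · refine (natDegree_sum_le_of_forall_le _ _ fun i hi => ?_).trans_lt
        (Nat.pred_lt_self Fintype.card_pos)
      exact (natDegree_C_mul_le _ _).trans (Nat.le_pred_of_lt (hdeg i hi))
  simpa [Q, finsetSum_coeff, mul_comm] using congrArg (coeff · d) hQ

theorem sum_neg_one_pow_mul_choose_mul_smul_pow {K R : Type*} [CommRing K] [CommRing R]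
    [Algebra K R] (r : ℕ) (g : R) :
    ∑ j ∈ range (r + 1), ((-1) ^ (r - j) * r.choose j * j : K) • g ^ j =
      (r : K) • (g * (g - 1) ^ (r - 1)) := by
  rcases r with _ | r
  · simp
  rw [sum_range_succ', Nat.add_sub_cancel, sub_eq_add_neg, add_pow, mul_sum, smul_sum]
  simp only [Nat.cast_zero, mul_zero, zero_smul, add_zero]
  refine sum_congr rfl fun i _ => ?_
  have hchoose : ((r + 1).choose (i + 1) * (i + 1 : ℕ) : K) = (r + 1 : ℕ) * r.choose i := by
    rw [← Nat.cast_mul, ← Nat.cast_mul, Nat.add_one_mul_choose_eq]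
  rw [Nat.add_sub_add_right, mul_assoc, hchoose, Algebra.smul_def, Algebra.smul_def]
  simp only [map_mul, map_pow, map_neg, map_one, map_natCast]
  ring

theorem list_prod_sub_one_mul_eq_zero {A : Type*} [Ring A] (G : Subgroup Aˣ) (r : ℕ)
    (hstep : ∀ k < r, ∀ N : A, (∀ g ∈ G, ((g : A) - 1) ^ (k + 1) * N = 0) →
      ∀ g ∈ G, ∀ h ∈ G, ((g : A) - 1) ^ k * ((h : A) - 1) * N = 0)
    (M : A) (hM : ∀ g ∈ G, ((g : A) - 1) ^ r * M = 0) (g : Fin r → Aˣ) (hg : ∀ i, g i ∈ G) :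
    (List.ofFn fun i => (g i : A) - 1).prod * M = 0 := by
  induction r generalizing M with
  | zero => simpa using hM 1 G.one_mem
  | succ r ih =>
    rw [List.ofFn_succ', List.prod_concat, mul_assoc]
    refine ih (fun k hk => hstep k (by omega)) _ (fun a ha => ?_) _ fun i => hg _
    rw [← mul_assoc]
    exact hstep r r.lt_succ_self M hM a ha _ (hg _)

section ChoosePoly

variable (p : ℕ) [Fact p.Prime]

noncomputable def choosePoly (k : ℕ) : (ZMod p)[X] :=
  C (k ! : ZMod p)⁻¹ * descPochhammer (ZMod p) k

theorem natDegree_choosePoly_le (k : ℕ) : (choosePoly p k).natDegree ≤ k :=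
  (natDegree_C_mul_le _ _).trans (descPochhammer_natDegree _ k).le

theorem choosePoly_eval_natCast {k : ℕ} (hk : k < p) (t : ℕ) :
    (choosePoly p k).eval (t : ZMod p) = t.choose k := by
  have hfac : (k ! : ZMod p) ≠ 0 := by
    rw [Ne, ZMod.natCast_eq_zero_iff, (Fact.out : p.Prime).dvd_factorial]
    omega
  rw [choosePoly, eval_mul, eval_C, descPochhammer_eval_eq_descFactorial,
    Nat.descFactorial_eq_factorial_mul_choose, Nat.cast_mul, inv_mul_cancel_left₀ hfac]

theorem coeff_one_choosePoly_zero : (choosePoly p 0).coeff 1 = 0 := by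
  simp [choosePoly, coeff_one]

theorem coeff_one_choosePoly_one : (choosePoly p 1).coeff 1 = 1 := by
  simp [choosePoly]

theorem one_add_pow_eq_sum_choosePoly {A : Type*} [Ring A] [Algebra (ZMod p) A] {y : A}
    (hy : y ^ p = 0) (t : ℕ) :
    (1 + y) ^ t = ∑ k ∈ range p, (choosePoly p k).eval (t : ZMod p) • y ^ k := by
  set f : ℕ → A := fun k => (t.choose k : ZMod p) • y ^ k
  have hf : ∀ k, t < k ∨ p ≤ k → f k = 0 := by
    rintro k (hk | hk)
    · simp [f, Nat.choose_eq_zero_of_lt hk]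
    · simp [f, pow_eq_zero_of_le hk hy]
  have hsum_eq : ∀ N, min (t + 1) p ≤ N → N ≤ t + 1 ∨ N ≤ p →
      ∑ k ∈ range (min (t + 1) p), f k = ∑ k ∈ range N, f k := by
    intro N h1 h2
    refine sum_subset (range_subset_range.2 h1) fun k hk hk' => hf k ?_
    simp only [mem_range] at hk hk'
    omega
  calc (1 + y) ^ t = ∑ k ∈ range (t + 1), f k := by
        rw [add_comm, (Commute.one_right y).add_pow]
        refine sum_congr rfl fun k _ => ?_
        simp [f, Algebra.smul_def, (Nat.cast_commute _ _).eq]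
    _ = ∑ k ∈ range p, f k := by
        rw [← hsum_eq _ (min_le_left _ _) (by omega), hsum_eq _ (min_le_right _ _) (by omega)]
    _ = _ := sum_congr rfl fun k hk => by
        rw [choosePoly_eval_natCast p (mem_range.1 hk)]

/-- The coefficient of `t` in `(1 + y) ^ t`, a truncated `log (1 + y)`. -/
noncomputable def truncLog {A : Type*} [Ring A] [Algebra (ZMod p) A] (y : A) : A :=
  ∑ k ∈ range p, (choosePoly p k).coeff 1 • y ^ k

theorem exists_truncLog_eq {A : Type*} [Ring A] [Algebra (ZMod p) A] (y : A) :
    ∃ u, truncLog p y = y * (1 + y * u) := by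
  obtain ⟨q, rfl⟩ : ∃ q, p = q + 2 := ⟨p - 2, by have := (Fact.out : p.Prime).two_le; omega⟩
  refine ⟨∑ k ∈ range q, (choosePoly (q + 2) (k + 2)).coeff 1 • y ^ k, ?_⟩
  rw [truncLog, sum_range_succ', sum_range_succ', coeff_one_choosePoly_zero,
    coeff_one_choosePoly_one, zero_smul, add_zero, one_smul, zero_add, pow_one, mul_add, mul_one,
    add_comm, mul_sum, mul_sum]
  refine congrArg (y + ·) (sum_congr rfl fun k _ => ?_)
  rw [mul_smul_comm, mul_smul_comm, ← pow_succ', ← pow_succ']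

theorem mul_pow_sub_one_pow_eq_sum_choosePoly {R : Type*} [CommRing R] [Algebra (ZMod p) R]
    {g h : R} (hh : (h - 1) ^ p = 0) (r t : ℕ) :
    (g * h ^ t - 1) ^ r = ∑ j ∈ range (r + 1), ∑ k ∈ range p,
      ((-1) ^ (r - j) * r.choose j * (choosePoly p k).eval ((j * t : ℕ) : ZMod p)) •
        (g ^ j * (h - 1) ^ k) := by
  rw [sub_eq_add_neg, add_pow]
  refine sum_congr rfl fun j _ => ?_
  have hpow : h ^ (j * t) = ∑ k ∈ range p,
      (choosePoly p k).eval ((j * t : ℕ) : ZMod p) • (h - 1) ^ k := by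
    rw [← one_add_pow_eq_sum_choosePoly p hh, add_sub_cancel]
  rw [mul_pow, ← pow_mul, mul_comm t, hpow, mul_sum, sum_mul, sum_mul]
  refine sum_congr rfl fun k _ => ?_
  rw [Algebra.smul_def, Algebra.smul_def]
  simp only [map_mul, map_pow, map_neg, map_one, map_natCast]
  ring

theorem natCast_smul_mul_sub_one_pow_mul_truncLog_eq_zero {R : Type*} [CommRing R]
    [Algebra (ZMod p) R] {r : ℕ} {g h : R} (hh : (h - 1) ^ p = 0)
    (hgh : ∀ t : ℕ, (g * h ^ t - 1) ^ r = 0) :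
    (r : ZMod p) • (g * (g - 1) ^ (r - 1)) * truncLog p (h - 1) = 0 := by
  let s := range (r + 1) ×ˢ range p
  -- `P (j, k)` is the coefficient of `gʲ (h - 1)ᵏ` in `(g hᵗ - 1)ʳ`, as a polynomial in `t`.
  let P : ℕ × ℕ → (ZMod p)[X] := fun jk =>
    C ((-1) ^ (r - jk.1) * r.choose jk.1 : ZMod p) *
      (choosePoly p jk.2).comp (C (jk.1 : ZMod p) * X)
  let v : ℕ × ℕ → R := fun jk => g ^ jk.1 * (h - 1) ^ jk.2
  have hdeg : ∀ jk ∈ s, (P jk).natDegree < Fintype.card (ZMod p) := by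
    rintro ⟨j, k⟩ hjk
    rw [ZMod.card]
    calc _ ≤ _ := natDegree_C_mul_le _ _
      _ ≤ _ := natDegree_comp_le
      _ ≤ k * 1 := Nat.mul_le_mul (natDegree_choosePoly_le p k)
          ((natDegree_C_mul_le _ _).trans natDegree_X_le)
      _ < p := by simp only [s, mem_product, mem_range] at hjk; omega
  have heval : ∀ a : ZMod p, ∑ jk ∈ s, (P jk).eval a • v jk = 0 := fun a => by
    rw [← hgh a.val, mul_pow_sub_one_pow_eq_sum_choosePoly p hh, sum_product]
    refine sum_congr rfl fun j _ => sum_congr rfl fun k _ => ?_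
    simp [P, v, mul_comm]
  rw [← sum_neg_one_pow_mul_choose_mul_smul_pow, truncLog, sum_mul_sum,
    ← sum_coeff_smul_eq_zero_of_forall_sum_eval_smul_eq_zero s P v hdeg heval 1, sum_product]
  refine sum_congr rfl fun j _ => sum_congr rfl fun k _ => ?_
  rw [smul_mul_smul_comm, coeff_C_mul, comp_C_mul_X_coeff, pow_one]
  congr 1
  ring

theorem sub_one_pow_pred_mul_sub_one_eq_zero {R : Type*} [CommRing R] [Algebra (ZMod p) R]
    {r : ℕ} (hr1 : 1 ≤ r) (hr2 : r < p) {g h : R} (hh : (h - 1) ^ r = 0)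
    (hgh : ∀ t : ℕ, (g * h ^ t - 1) ^ r = 0) :
    (g - 1) ^ (r - 1) * (h - 1) = 0 := by
  have hcoeff := natCast_smul_mul_sub_one_pow_mul_truncLog_eq_zero p
    (pow_eq_zero_of_le hr2.le hh) hgh
  have hr : (r : ZMod p) ≠ 0 := by
    rw [Ne, ZMod.natCast_eq_zero_iff]
    exact fun hdvd => absurd (Nat.le_of_dvd hr1 hdvd) (by omega)
  have hg : IsUnit g := by
    simpa using (show IsNilpotent (g - 1) from ⟨r, by simpa using hgh 0⟩).isUnit_one_add
  obtain ⟨u, hL⟩ := exists_truncLog_eq p (h - 1)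
  have hu : IsUnit (1 + (h - 1) * u) :=
    ((Commute.all _ u).isNilpotent_mul_right ⟨r, hh⟩).isUnit_one_add
  rwa [smul_mul_assoc, smul_eq_zero_iff_right hr, mul_assoc, hg.mul_right_eq_zero, hL,
    ← mul_assoc, hu.mul_left_eq_zero] at hcoeff

open scoped IsMulCommutative in
theorem sub_one_pow_pred_mul_sub_one_mul_eq_zero {A : Type*} [Ring A] [Algebra (ZMod p) A]
    {r : ℕ} (hr1 : 1 ≤ r) (hr2 : r < p) {a b m : A} (hab : Commute a b)
    (hb : (b - 1) ^ r * m = 0) (habm : ∀ t : ℕ, (a * b ^ t - 1) ^ r * m = 0) :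
    (a - 1) ^ (r - 1) * (b - 1) * m = 0 := by
  let S := Algebra.adjoin (ZMod p) {a, b}
  have : IsMulCommutative S := Algebra.isMulCommutative_adjoin (ZMod p) (by
    rintro x (rfl | rfl) y (rfl | rfl) <;> first | rfl | exact hab.eq | exact hab.eq.symm)
  let I : Ideal S := LinearMap.ker (LinearMap.toSpanSingleton S A m)
  have hI : ∀ s : S, Ideal.Quotient.mk I s = 0 ↔ (s : A) * m = 0 := fun s => by
    rw [Ideal.Quotient.eq_zero_iff_mem, LinearMap.mem_ker, LinearMap.toSpanSingleton_apply,
      Subalgebra.smul_def, smul_eq_mul]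
  let a' : S := ⟨a, Algebra.subset_adjoin (by simp)⟩
  let b' : S := ⟨b, Algebra.subset_adjoin (by simp)⟩
  have key := sub_one_pow_pred_mul_sub_one_eq_zero p hr1 hr2
    (g := Ideal.Quotient.mk I a') (h := Ideal.Quotient.mk I b') ?_ ?_
  · rw [← map_one (Ideal.Quotient.mk I), ← map_sub, ← map_sub, ← map_pow, ← map_mul, hI] at key
    simpa [a', b'] using key
  · rw [← map_one (Ideal.Quotient.mk I), ← map_sub, ← map_pow, hI]
    simpa [b'] using hb
  · intro t
    rw [← map_one (Ideal.Quotient.mk I), ← map_pow, ← map_mul, ← map_sub, ← map_pow, hI]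
    simpa [a', b'] using habm t

theorem Subgroup.sub_one_pow_pred_mul_sub_one_mul_eq_zero {A : Type*} [Ring A]
    [Algebra (ZMod p) A] (G : Subgroup Aˣ) (hcomm : ∀ a ∈ G, ∀ b ∈ G, a * b = b * a)
    {r : ℕ} (hr1 : 1 ≤ r) (hr2 : r < p) {M : A} (hM : ∀ g ∈ G, ((g : A) - 1) ^ r * M = 0)
    {g h : Aˣ} (hg : g ∈ G) (hh : h ∈ G) :
    ((g : A) - 1) ^ (r - 1) * ((h : A) - 1) * M = 0 := by
  refine _root_.sub_one_pow_pred_mul_sub_one_mul_eq_zero p hr1 hr2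
    (Units.ext_iff.1 (hcomm g hg h hh)) (hM h hh) fun t => ?_
  simpa using hM _ (G.mul_mem hg (G.pow_mem hh t))

end ChoosePoly

theorem strong_nilpotency_lemma_general
    (p : ℕ) (hp : p.Prime) (n : ℕ)
    (G : Subgroup (GL (Fin n) (ZMod p)))
    (hcomm : ∀ a ∈ G, ∀ b ∈ G, a * b = b * a)
    (r : ℕ) (hr1 : 1 ≤ r) (hr2 : r ≤ p - 1)
    (M : Matrix (Fin n) (Fin n) (ZMod p))
    (hM : ∀ g ∈ G, ((g : Matrix (Fin n) (Fin n) (ZMod p)) - 1) ^ r * M = 0) :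
    (∀ g ∈ G, ∀ h ∈ G,
        ((g : Matrix (Fin n) (Fin n) (ZMod p)) - 1) ^ (r - 1) *
          ((h : Matrix (Fin n) (Fin n) (ZMod p)) - 1) * M = 0) ∧
      (∀ g : Fin r → GL (Fin n) (ZMod p), (∀ i, g i ∈ G) →
        (List.ofFn fun i => ((g i : Matrix (Fin n) (Fin n) (ZMod p)) - 1)).prod * M = 0) := by
  have : Fact p.Prime := ⟨hp⟩
  refine ⟨fun g hg h hh =>
    G.sub_one_pow_pred_mul_sub_one_mul_eq_zero p hcomm hr1 (by omega) hM hg hh,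
    list_prod_sub_one_mul_eq_zero G r (fun k hk N hN g hg h hh => ?_) M hM⟩
  simpa using G.sub_one_pow_pred_mul_sub_one_mul_eq_zero p hcomm (r := k + 1) (by omega) (by omega)
    hN hg hh

/-- Let `p` be a prime, `n ≥ 1`, `G` a commutative subgroup of `GL n (ZMod p)`,
`1 ≤ r ≤ p - 1`, and `M` an `n × n` matrix over `ZMod p`. If `(g - 1) ^ r * M = 0` for all
`g ∈ G`, then `(g - 1) ^ (r - 1) * (h - 1) * M = 0` for all `g, h ∈ G`; consequently
`(g₁ - 1)(g₂ - 1)⋯(g_r - 1) * M = 0` for all `g₁, …, g_r ∈ G`. -/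
theorem strong_nilpotency_lemma
    (p : ℕ) (hp : p.Prime) (n : ℕ) (hn : 1 ≤ n)
    (G : Subgroup (GL (Fin n) (ZMod p)))
    (hcomm : ∀ a ∈ G, ∀ b ∈ G, a * b = b * a)
    (r : ℕ) (hr1 : 1 ≤ r) (hr2 : r ≤ p - 1)
    (M : Matrix (Fin n) (Fin n) (ZMod p))
    (hM : ∀ g ∈ G, ((g : Matrix (Fin n) (Fin n) (ZMod p)) - 1) ^ r * M = 0) :
    (∀ g ∈ G, ∀ h ∈ G,
        ((g : Matrix (Fin n) (Fin n) (ZMod p)) - 1) ^ (r - 1) *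
          ((h : Matrix (Fin n) (Fin n) (ZMod p)) - 1) * M = 0) ∧
      (∀ g : Fin r → GL (Fin n) (ZMod p), (∀ i, g i ∈ G) →
        (List.ofFn fun i => ((g i : Matrix (Fin n) (Fin n) (ZMod p)) - 1)).prod * M = 0) :=
  strong_nilpotency_lemma_general p hp n G hcomm r hr1 hr2 M hM
end

section
/- Let p be a prime and R a commutative ring of characteristic p. Let x, y ∈ R be nonzero elements such that x^i * y^{p−1−i} = 0 for every 0 ≤ i ≤ p−1. Writing (z)_n := 1 + z + z^2 + ⋯ + z^{n−1} for z ∈ R and n ≥ 0 (with (z)_0 = 0), the following are equivalent: (1) ∑_{r=1}^{p−1} (1+x)^{r·i} · (1+y)_{r·j} = 0 for all 1 ≤ i, j ≤ p−1; (2) ∑_{r=1}^{p−1} (1+x)^{r·i} · (1+y)_r = 0 for all 1 ≤ i ≤ p−1; (3) ∑_{r=1}^{p−1} (1+x)^r · (1+y)_{r·j} = 0 for all 1 ≤ j ≤ p−1; (4) x^i * y^{p−2−i} = 0 for all 0 ≤ i ≤ p−2. -/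
/-!
Write `S(i, j)` for the sum in (1). Since `x ^ a * y ^ b = 0` as soon as `a + b ≥ p - 1`,
expanding `(1 + x) ^ (r i) = ∑ binom(r i, m) x ^ m` and `(1 + y)_(r j) = ∑ binom(r j, l + 1) y ^ l`
leaves only the monomials `x ^ m * y ^ l` with `m + l ≤ p - 2`. Their coefficients are sums over
`r ∈ 𝔽ₚˣ` of `binom(r i, m) binom(r j, l + 1)`, a polynomial in `r` of degree at most `p - 1`
vanishing at `0`, and such a sum is minus its coefficient of `r ^ (p - 1)`. With Wilson's theorem
and `binom(p - 1, m) ≡ (-1) ^ m` this gives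
`S(i, j) = ∑_{m ≤ p - 2} i ^ m j ^ (p - 1 - m) (-x) ^ m y ^ (p - 2 - m)`.
Hence (4) implies (1), which specialises to (2) and (3); by Fermat (3) at `j` is (2) at `i = j⁻¹`,
and (2) gives (4) by orthogonality of the characters `a ↦ a ^ k` of `𝔽ₚˣ`.
-/

open Finset Polynomial
open scoped Nat

theorem Nat.sum_range_choose_eq_choose_succ (n l : ℕ) :
    ∑ k ∈ range n, k.choose l = n.choose (l + 1) := by
  induction n with
  | zero => simp
  | succ n ih => rw [sum_range_succ, ih, choose_succ_succ', add_comm]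

theorem one_add_pow_eq_sum_range_of_pow_eq_zero {R : Type*} [CommSemiring R] {x : R} {N : ℕ}
    (hx : x ^ N = 0) (n : ℕ) : (1 + x) ^ n = ∑ m ∈ range N, (n.choose m : R) * x ^ m := by
  have hchoose : ∀ m ≥ n + 1, (n.choose m : R) * x ^ m = 0 := fun m hm => by
    rw [Nat.choose_eq_zero_of_lt hm, Nat.cast_zero, zero_mul]
  have hnil : ∀ m ≥ N, (n.choose m : R) * x ^ m = 0 := fun m hm => by
    rw [pow_eq_zero_of_le hm hx, mul_zero]
  rw [add_comm, add_pow]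
  simp_rw [one_pow, mul_one, mul_comm (x ^ _)]
  rw [← eventually_constant_sum hchoose (Nat.le_add_right _ N),
    eventually_constant_sum hnil (Nat.le_add_left _ _)]

theorem sum_range_one_add_pow_eq_of_pow_eq_zero {R : Type*} [CommSemiring R] {y : R} {N : ℕ}
    (hy : y ^ N = 0) (n : ℕ) :
    ∑ k ∈ range n, (1 + y) ^ k = ∑ l ∈ range N, (n.choose (l + 1) : R) * y ^ l := by
  simp_rw [one_add_pow_eq_sum_range_of_pow_eq_zero hy]
  rw [sum_comm]
  simp_rw [← sum_mul, ← Nat.cast_sum, Nat.sum_range_choose_eq_choose_succ]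

theorem pow_mul_pow_eq_zero_of_le {M : Type*} [MonoidWithZero M] {x y : M} {N : ℕ}
    (h : ∀ i ≤ N, x ^ i * y ^ (N - i) = 0) {a b : ℕ} (hab : N ≤ a + b) : x ^ a * y ^ b = 0 := by
  rcases le_total a N with ha | ha
  · rw [← Nat.add_sub_of_le (show N - a ≤ b by omega), pow_add, ← mul_assoc, h a ha, zero_mul]
  · have hxN : x ^ N = 0 := by simpa using h N le_rfl
    rw [pow_eq_zero_of_le ha hxN, zero_mul]

theorem Fintype.sum_eq_add_sum_units {G₀ M : Type*} [GroupWithZero G₀] [Fintype G₀] [DecidableEq G₀]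
    [AddCommMonoid M] (f : G₀ → M) : ∑ a, f a = f 0 + ∑ u : G₀ˣ, f u := by
  rw [Fintype.sum_eq_add_sum_subtype_ne f 0]
  congr 1
  exact (Fintype.sum_equiv unitsEquivNeZero _ _ fun _ => rfl).symm

theorem FiniteField.sum_pow_card_sub_one (K : Type*) [Field K] [Fintype K] :
    ∑ a : K, a ^ (Fintype.card K - 1) = -1 := by
  classical
  have hq := Fintype.one_lt_card (α := K)
  rw [Fintype.sum_eq_add_sum_units, FiniteField.sum_pow_units, if_pos dvd_rfl,
    zero_pow (by omega), zero_add]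

theorem Polynomial.sum_eval_eq_neg_coeff_card_sub_one {K : Type*} [Field K] [Fintype K]
    (F : K[X]) (hF : F.natDegree < Fintype.card K) :
    ∑ a : K, F.eval a = -F.coeff (Fintype.card K - 1) := by
  classical
  have hq := Fintype.one_lt_card (α := K)
  simp_rw [eval_eq_sum_range' hF]
  rw [sum_comm, sum_eq_single (Fintype.card K - 1)]
  · rw [← mul_sum, FiniteField.sum_pow_card_sub_one, mul_neg_one]
  · intro d hd hne
    rw [← mul_sum, FiniteField.sum_pow_lt_card_sub_one K d (by grind), mul_zero]
  · intro h
    exact absurd (mem_range.mpr (by omega)) h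

theorem Polynomial.natDegree_descPochhammer_comp_C_mul_X_le {K : Type*} [CommRing K] [IsDomain K]
    (m : ℕ) (a : K) :
    ((descPochhammer K m).comp (C a * X)).natDegree ≤ m :=
  natDegree_comp_le.trans <| by
    simpa using Nat.mul_le_mul_left m ((natDegree_C_mul_le a X).trans natDegree_X_le)

section

variable {p : ℕ} [Fact p.Prime]

theorem ZMod.sum_Icc_natCast_eq_sum_units {M : Type*} [AddCommMonoid M] (f : ZMod p → M) :
    ∑ r ∈ Icc 1 (p - 1), f r = ∑ u : (ZMod p)ˣ, f u := by
  have hp := (Fact.out : p.Prime).pos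
  refine sum_bij' (fun r hr => Units.mk0 (r : ZMod p) ?_) (fun u _ => (u : ZMod p).val)
    (fun _ _ => mem_univ _) (fun u _ => ?_) (fun r hr => ?_) (fun u _ => ?_) (fun _ _ => rfl)
  · rw [Ne, ZMod.natCast_eq_zero_iff]
    intro h
    have := Nat.le_of_dvd (by grind) h
    grind
  · have := ZMod.val_lt (u : ZMod p)
    have := (ZMod.val_ne_zero (u : ZMod p)).mpr u.ne_zero
    grind
  · simp only [Units.val_mk0]
    rw [ZMod.val_cast_of_lt (by grind)]
  · exact Units.ext (ZMod.natCast_zmod_val _)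

theorem ZMod.choose_sub_one_eq_neg_one_pow {k : ℕ} (hk : k < p) :
    ((p - 1).choose k : ZMod p) = (-1) ^ k := by
  induction k with
  | zero => simp
  | succ k ih =>
    have hpascal := Nat.choose_succ_succ' (p - 1) k
    rw [Nat.sub_add_cancel (Fact.out : p.Prime).one_le] at hpascal
    have hpk : ((p.choose (k + 1) : ℕ) : ZMod p) = 0 :=
      (ZMod.natCast_eq_zero_iff _ _).mpr ((Fact.out : p.Prime).dvd_choose_self k.succ_ne_zero hk)
    rw [hpascal, Nat.cast_add, ih (by omega)] at hpk
    rw [pow_succ, mul_neg_one, eq_neg_of_add_eq_zero_right hpk]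

theorem ZMod.neg_one_pow_mul_factorial_mul_factorial {m n : ℕ} (h : m + n = p - 1) :
    ((-1) ^ m * m ! * n ! : ZMod p) = -1 := by
  have hp := (Fact.out : p.Prime).pos
  have hchoose : ((p - 1).choose m * m ! * n ! : ℕ) = (p - 1)! := by
    rw [← Nat.choose_mul_factorial_mul_factorial (show m ≤ p - 1 by omega),
      show p - 1 - m = n by omega]
  replace hchoose := congrArg (fun k : ℕ => (k : ZMod p)) hchoose
  simp only [Nat.cast_mul, ZMod.wilsons_lemma,
    ZMod.choose_sub_one_eq_neg_one_pow (show m < p by omega)] at hchoose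
  exact hchoose

theorem ZMod.exists_mem_Icc_natCast_mul_eq_one {i : ℕ} (hi : i ∈ Icc 1 (p - 1)) :
    ∃ j ∈ Icc 1 (p - 1), ((i * j : ℕ) : ZMod p) = 1 := by
  have hp := (Fact.out : p.Prime).pos
  have hi0 : (i : ZMod p) ≠ 0 := by
    rw [Ne, ZMod.natCast_eq_zero_iff]
    intro h
    have := Nat.le_of_dvd (by grind) h
    grind
  refine ⟨((i : ZMod p)⁻¹).val, mem_Icc.mpr ⟨?_, ?_⟩, ?_⟩
  · exact Nat.pos_of_ne_zero ((ZMod.val_ne_zero _).mpr (inv_ne_zero hi0))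
  · have := ZMod.val_lt (i : ZMod p)⁻¹
    omega
  · rw [Nat.cast_mul, ZMod.natCast_zmod_val, mul_inv_cancel₀ hi0]

theorem ZMod.sum_Icc_eval_eq_neg_coeff (F : (ZMod p)[X]) (hF : F.natDegree < p)
    (h0 : F.eval 0 = 0) : ∑ r ∈ Icc 1 (p - 1), F.eval (r : ZMod p) = -F.coeff (p - 1) := by
  have hsum := F.sum_eval_eq_neg_coeff_card_sub_one (by rwa [ZMod.card])
  rw [ZMod.card, Fintype.sum_eq_add_sum_units, h0, zero_add] at hsum
  exact (ZMod.sum_Icc_natCast_eq_sum_units (F.eval ·)).trans hsum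

theorem ZMod.sum_Icc_choose_mul_choose {m n : ℕ} (hn : n ≠ 0) (hmn : m + n ≤ p - 1) (i j : ℕ) :
    ∑ r ∈ Icc 1 (p - 1), ((r * i).choose m * (r * j).choose n : ZMod p) =
      if m + n = p - 1 then (-i : ZMod p) ^ m * (j : ZMod p) ^ n else 0 := by
  have hp : p.Prime := Fact.out
  have hp2 := hp.two_le
  set F : (ZMod p)[X] := (descPochhammer (ZMod p) m).comp (C (i : ZMod p) * X) *
    (descPochhammer (ZMod p) n).comp (C (j : ZMod p) * X) with hF
  have hF_eval (r : ℕ) :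
      F.eval (r : ZMod p) = m ! * n ! * ((r * i).choose m * (r * j).choose n) := by
    simp only [hF, eval_mul, eval_comp, eval_C, eval_X]
    rw [mul_comm (i : ZMod p), mul_comm (j : ZMod p), ← Nat.cast_mul, ← Nat.cast_mul,
      descPochhammer_eval_eq_descFactorial, descPochhammer_eval_eq_descFactorial,
      Nat.descFactorial_eq_factorial_mul_choose, Nat.descFactorial_eq_factorial_mul_choose]
    push_cast
    ring
  have hF_deg : F.natDegree ≤ m + n :=
    natDegree_mul_le.trans (Nat.add_le_add (natDegree_descPochhammer_comp_C_mul_X_le m _)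
      (natDegree_descPochhammer_comp_C_mul_X_le n _))
  have hlead (k : ℕ) : (descPochhammer (ZMod p) k).coeff k = 1 := by
    simpa using (monic_descPochhammer (ZMod p) k).coeff_natDegree
  have hF_coeff : F.coeff (m + n) = (i : ZMod p) ^ m * (j : ZMod p) ^ n := by
    rw [coeff_mul_add_eq_of_natDegree_le (natDegree_descPochhammer_comp_C_mul_X_le m _)
      (natDegree_descPochhammer_comp_C_mul_X_le n _), comp_C_mul_X_coeff, comp_C_mul_X_coeff,
      hlead, hlead, one_mul, one_mul]
  have hF_zero : F.eval 0 = 0 := by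
    rw [← Nat.cast_zero, hF_eval, zero_mul, zero_mul,
      Nat.choose_eq_zero_of_lt (Nat.pos_of_ne_zero hn)]
    simp
  have hfact {k : ℕ} (hk : k < p) : (k ! : ZMod p) ≠ 0 := by
    rw [Ne, ZMod.natCast_eq_zero_iff, hp.dvd_factorial]
    omega
  apply mul_left_cancel₀ (mul_ne_zero (hfact (by omega : m < p)) (hfact (by omega : n < p)))
  simp_rw [mul_sum, ← hF_eval, ZMod.sum_Icc_eval_eq_neg_coeff F (by omega) hF_zero]
  split_ifs with h
  · rw [← h, hF_coeff]
    linear_combination (-((i : ZMod p) ^ m * (j : ZMod p) ^ n)) *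
      ZMod.neg_one_pow_mul_factorial_mul_factorial h
  · rw [coeff_eq_zero_of_natDegree_lt (by omega), neg_zero, mul_zero]

variable {R : Type*} [CommRing R] [CharP R p]

theorem CharP.sum_Icc_natCast_pow (k : ℕ) :
    ∑ a ∈ Icc 1 (p - 1), (a : R) ^ k = if p - 1 ∣ k then -1 else 0 := by
  classical
  have hsum := congrArg (ZMod.castHom (dvd_refl p) R) (FiniteField.sum_pow_units (ZMod p) k)
  rw [map_sum, ZMod.card,
    ← ZMod.sum_Icc_natCast_eq_sum_units (fun a => ZMod.castHom (dvd_refl p) R (a ^ k))] at hsum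
  simpa [apply_ite] using hsum

theorem CharP.eq_zero_of_forall_sum_natCast_pow_mul_eq_zero {c : ℕ → R}
    (h : ∀ a ∈ Icc 1 (p - 1), ∑ m ∈ range (p - 1), (a : R) ^ m * c m = 0) {n : ℕ}
    (hn : n < p - 1) : c n = 0 := by
  have horth : ∀ m ∈ range (p - 1), (p - 1 ∣ m + (p - 1 - n) ↔ m = n) := by
    intro m hm
    rw [mem_range] at hm
    constructor
    · intro hdvd
      have := Nat.eq_of_dvd_of_lt_two_mul (by omega) hdvd (by omega)
      omega
    · rintro rfl
      rw [Nat.add_sub_of_le hn.le]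
  calc c n
      = -∑ m ∈ range (p - 1), (∑ a ∈ Icc 1 (p - 1), (a : R) ^ (m + (p - 1 - n))) * c m := by
        simp_rw [CharP.sum_Icc_natCast_pow]
        rw [sum_congr rfl fun m hm => by rw [if_congr (horth m hm) rfl rfl]]
        simp [ite_mul, sum_ite_eq', hn]
    _ = -∑ a ∈ Icc 1 (p - 1),
          (a : R) ^ (p - 1 - n) * ∑ m ∈ range (p - 1), (a : R) ^ m * c m := by
        simp_rw [sum_mul, mul_sum, sum_comm (s := range (p - 1)), pow_add]
        exact congrArg Neg.neg (sum_congr rfl fun a _ => sum_congr rfl fun m _ => by ring)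
    _ = 0 := neg_eq_zero.mpr (sum_eq_zero fun a ha => by rw [h a ha, mul_zero])

theorem CharP.natCast_pow_sub_eq_of_mul_eq_one {i j : ℕ} (hij : ((i * j : ℕ) : ZMod p) = 1)
    {m : ℕ} (hm : m ≤ p - 1) : (j : R) ^ (p - 1 - m) = (i : R) ^ m := by
  have hij' : (i : R) * j = 1 := by
    simpa using congrArg (ZMod.castHom (dvd_refl p) R) hij
  have hj : (j : R) ^ (p - 1) = 1 := by
    have hj0 : (j : ZMod p) ≠ 0 := right_ne_zero_of_mul_eq_one (by rwa [← Nat.cast_mul])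
    simpa using congrArg (ZMod.castHom (dvd_refl p) R) (ZMod.pow_card_sub_one_eq_one hj0)
  calc (j : R) ^ (p - 1 - m) = ((i : R) * j) ^ m * (j : R) ^ (p - 1 - m) := by
        rw [hij', one_pow, one_mul]
    _ = (i : R) ^ m * (j : R) ^ (p - 1) := by
        rw [mul_pow, mul_assoc, ← pow_add, Nat.add_sub_of_le hm]
    _ = (i : R) ^ m := by rw [hj, mul_one]

theorem sum_Icc_choose_mul_choose_mul_pow_mul_pow {x y : R}
    (hxy : ∀ i ≤ p - 1, x ^ i * y ^ (p - 1 - i) = 0) (i j : ℕ) {m : ℕ} (hm : m < p - 1) (l : ℕ) :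
    (∑ r ∈ Icc 1 (p - 1), ((r * i).choose m * (r * j).choose (l + 1) : R)) * (x ^ m * y ^ l) =
      if p - 2 - m = l then (i : R) ^ m * (j : R) ^ (p - 1 - m) * ((-x) ^ m * y ^ (p - 2 - m))
      else 0 := by
  by_cases hml : p - 1 ≤ m + l
  · rw [pow_mul_pow_eq_zero_of_le hxy hml, mul_zero, if_neg (by omega)]
  have hcast : ∑ r ∈ Icc 1 (p - 1), ((r * i).choose m * (r * j).choose (l + 1) : R) =
      ZMod.castHom (dvd_refl p) R
        (∑ r ∈ Icc 1 (p - 1), ((r * i).choose m * (r * j).choose (l + 1) : ZMod p)) := by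
    simp
  rw [hcast, ZMod.sum_Icc_choose_mul_choose l.add_one_ne_zero (by omega),
    apply_ite (ZMod.castHom _ R)]
  by_cases h : p - 2 - m = l
  · rw [if_pos (by omega), if_pos h, ← h, show p - 2 - m + 1 = p - 1 - m by omega]
    simp only [map_mul, map_pow, map_neg, map_natCast]
    rw [neg_pow (i : R), neg_pow x]
    ring
  · rw [if_neg (by omega), if_neg h, map_zero, zero_mul]

theorem sum_one_add_pow_mul_geom_sum_eq {x y : R}
    (hxy : ∀ i ≤ p - 1, x ^ i * y ^ (p - 1 - i) = 0) (i j : ℕ) :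
    ∑ r ∈ Icc 1 (p - 1), (1 + x) ^ (r * i) * ∑ k ∈ range (r * j), (1 + y) ^ k =
      ∑ m ∈ range (p - 1), (i : R) ^ m * (j : R) ^ (p - 1 - m) * ((-x) ^ m * y ^ (p - 2 - m)) := by
  have hx : x ^ (p - 1) = 0 := by simpa using hxy (p - 1) le_rfl
  have hy : y ^ (p - 1) = 0 := by simpa using hxy 0 (Nat.zero_le _)
  calc ∑ r ∈ Icc 1 (p - 1), (1 + x) ^ (r * i) * ∑ k ∈ range (r * j), (1 + y) ^ k
      = ∑ r ∈ Icc 1 (p - 1), ∑ m ∈ range (p - 1), ∑ l ∈ range (p - 1),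
          ((r * i).choose m * (r * j).choose (l + 1) : R) * (x ^ m * y ^ l) := by
        simp_rw [one_add_pow_eq_sum_range_of_pow_eq_zero hx,
          sum_range_one_add_pow_eq_of_pow_eq_zero hy, sum_mul_sum]
        exact sum_congr rfl fun _ _ => sum_congr rfl fun _ _ => sum_congr rfl fun _ _ => by ring
    _ = ∑ m ∈ range (p - 1), ∑ l ∈ range (p - 1),
          (∑ r ∈ Icc 1 (p - 1), ((r * i).choose m * (r * j).choose (l + 1) : R)) *
            (x ^ m * y ^ l) := by
        simp_rw [sum_mul]
        rw [sum_comm]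
        exact sum_congr rfl fun _ _ => sum_comm
    _ = _ := by
        refine sum_congr rfl fun m hm => ?_
        rw [mem_range] at hm
        rw [sum_congr rfl fun l _ => sum_Icc_choose_mul_choose_mul_pow_mul_pow hxy i j hm l,
          sum_ite_eq, if_pos (mem_range.mpr (by omega))]

end

theorem geometric_sum_vanishing_tfae_general
    (p : ℕ) (hp : p.Prime) (R : Type*) [CommRing R] [CharP R p]
    (x y : R)
    (hxy : ∀ i ≤ p - 1, x ^ i * y ^ (p - 1 - i) = 0) :
    List.TFAE
      [∀ i ∈ Finset.Icc 1 (p - 1), ∀ j ∈ Finset.Icc 1 (p - 1),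
         ∑ r ∈ Finset.Icc 1 (p - 1),
           (1 + x) ^ (r * i) * ∑ k ∈ Finset.range (r * j), (1 + y) ^ k = 0,
       ∀ i ∈ Finset.Icc 1 (p - 1),
         ∑ r ∈ Finset.Icc 1 (p - 1),
           (1 + x) ^ (r * i) * ∑ k ∈ Finset.range r, (1 + y) ^ k = 0,
       ∀ j ∈ Finset.Icc 1 (p - 1),
         ∑ r ∈ Finset.Icc 1 (p - 1),
           (1 + x) ^ r * ∑ k ∈ Finset.range (r * j), (1 + y) ^ k = 0,
       ∀ i ≤ p - 2, x ^ i * y ^ (p - 2 - i) = 0] := by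
  have : Fact p.Prime := ⟨hp⟩
  have hp2 := hp.two_le
  have key := sum_one_add_pow_mul_geom_sum_eq hxy
  have key_left (i : ℕ) : ∑ r ∈ Icc 1 (p - 1), (1 + x) ^ (r * i) * ∑ k ∈ range r, (1 + y) ^ k =
      ∑ m ∈ range (p - 1), (i : R) ^ m * ((-x) ^ m * y ^ (p - 2 - m)) := by
    simpa using key i 1
  have key_right (j : ℕ) : ∑ r ∈ Icc 1 (p - 1), (1 + x) ^ r * ∑ k ∈ range (r * j), (1 + y) ^ k =
      ∑ m ∈ range (p - 1), (j : R) ^ (p - 1 - m) * ((-x) ^ m * y ^ (p - 2 - m)) := by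
    simpa using key 1 j
  have hone : 1 ∈ Icc 1 (p - 1) := mem_Icc.mpr ⟨le_rfl, by omega⟩
  tfae_have 1 → 2 := fun H i hi => by simpa using H i hi 1 hone
  tfae_have 1 → 3 := fun H j hj => by simpa using H 1 hone j hj
  tfae_have 4 → 1 := fun H i _ j _ => by
    rw [key]
    refine sum_eq_zero fun m hm => ?_
    rw [neg_pow, mul_assoc ((-1) ^ m), H m (by have := mem_range.mp hm; omega), mul_zero, mul_zero]
  tfae_have 2 → 4 := by
    intro H n hn
    have h := CharP.eq_zero_of_forall_sum_natCast_pow_mul_eq_zero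
      (c := fun m => (-x) ^ m * y ^ (p - 2 - m)) (fun a ha => (key_left a).symm.trans (H a ha))
      (n := n) (by omega)
    rwa [neg_pow, mul_assoc, neg_one_pow_mul_eq_zero_iff] at h
  tfae_have 3 → 2 := by
    intro H i hi
    obtain ⟨j, hj, hij⟩ := ZMod.exists_mem_Icc_natCast_mul_eq_one hi
    rw [key_left, ← H j hj, key_right]
    refine sum_congr rfl fun m hm => ?_
    rw [CharP.natCast_pow_sub_eq_of_mul_eq_one hij (by rw [mem_range] at hm; omega)]
  tfae_finish

/-- Let `p` be a prime and `R` a commutative ring of characteristic `p`. Let `x, y ∈ R` be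
nonzero elements with `x ^ i * y ^ (p - 1 - i) = 0` for all `0 ≤ i ≤ p - 1`. Writing
`(z)_n := 1 + z + ⋯ + z^(n-1)`, the following are equivalent:
(1) `∑_{r=1}^{p-1} (1+x)^(r·i) · (1+y)_(r·j) = 0` for all `1 ≤ i, j ≤ p - 1`;
(2) `∑_{r=1}^{p-1} (1+x)^(r·i) · (1+y)_r = 0` for all `1 ≤ i ≤ p - 1`;
(3) `∑_{r=1}^{p-1} (1+x)^r · (1+y)_(r·j) = 0` for all `1 ≤ j ≤ p - 1`;
(4) `x ^ i * y ^ (p - 2 - i) = 0` for all `0 ≤ i ≤ p - 2`. -/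
theorem geometric_sum_vanishing_tfae
    (p : ℕ) (hp : p.Prime) (R : Type*) [CommRing R] [CharP R p]
    (x y : R) (hx : x ≠ 0) (hy : y ≠ 0)
    (hxy : ∀ i ≤ p - 1, x ^ i * y ^ (p - 1 - i) = 0) :
    List.TFAE
      [∀ i ∈ Finset.Icc 1 (p - 1), ∀ j ∈ Finset.Icc 1 (p - 1),
         ∑ r ∈ Finset.Icc 1 (p - 1),
           (1 + x) ^ (r * i) * ∑ k ∈ Finset.range (r * j), (1 + y) ^ k = 0,
       ∀ i ∈ Finset.Icc 1 (p - 1),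
         ∑ r ∈ Finset.Icc 1 (p - 1),
           (1 + x) ^ (r * i) * ∑ k ∈ Finset.range r, (1 + y) ^ k = 0,
       ∀ j ∈ Finset.Icc 1 (p - 1),
         ∑ r ∈ Finset.Icc 1 (p - 1),
           (1 + x) ^ r * ∑ k ∈ Finset.range (r * j), (1 + y) ^ k = 0,
       ∀ i ≤ p - 2, x ^ i * y ^ (p - 2 - i) = 0] :=
  geometric_sum_vanishing_tfae_general p hp R x y hxy
end

section
/- Let p be a prime and let G = A ⋊_{ρ,φ} H be the realizing group of a datum (H, A, ρ, φ). Then every element g of G satisfies g^p = 1 if and only if all of the following hold: (i) h^p = 1 for every h ∈ H; (ii) for every h ∈ H and a ∈ A, ∑_{i=0}^{p−1} (h^i) ▹ a = 0; (iii) for every h ∈ H, ∑_{i=1}^{p−1} φ (h^i) h = 0 (i.e., φ h h + φ (h^2) h + ⋯ + φ (h^{p−1}) h = 0). -/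
/-!
By induction on `n`, `(a, h) ^ n = (∑_{i<n} h^i ▹ a + ∑_{i<n} φ (h^i) h, h ^ n)`.
Taking `a = 0` shows that `g ^ p = 1` for all `g` forces (i) and (iii) (the `i = 0` term of the
cocycle sum vanishes as `φ 1 h = 0`); given those, `(a, h) ^ p = 1` is exactly (ii).
-/

theorem Finset.sum_range_eq_sum_Icc_pred {M : Type*} [AddCommMonoid M] {f : ℕ → M}
    (hf : f 0 = 0) (n : ℕ) : ∑ i ∈ Finset.range n, f i = ∑ i ∈ Finset.Icc 1 (n - 1), f i := by
  rcases Nat.eq_zero_or_pos n with rfl | hn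
  · rfl
  · rw [Finset.range_eq_Ico, Finset.sum_eq_sum_Ico_succ_bot hn, hf, zero_add, zero_add,
      ← Finset.Ico_add_one_right_eq_Icc, Nat.sub_one_add_one hn.ne']

theorem realizing_pow_eq {H A : Type*} [Group H] [AddCommGroup A]
    (ρ : H →* Multiplicative (AddAut A)) (φ : H → H → A) [Group (A × H)]
    (hmul : ∀ (a b : A) (h k : H), (a, h) * (b, k) = (a + (ρ h).toAdd b + φ h k, h * k))
    (hone : (1 : A × H) = (0, 1)) (a : A) (h : H) (n : ℕ) :
    (a, h) ^ n =
      (∑ i ∈ Finset.range n, (ρ (h ^ i)).toAdd a + ∑ i ∈ Finset.range n, φ (h ^ i) h, h ^ n) := by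
  induction n with
  | zero => simp [hone]
  | succ n ih =>
    rw [pow_succ, ih, hmul, pow_succ, Finset.sum_range_succ, Finset.sum_range_succ]
    congr 1
    abel

theorem realizing_group_exponent_p_iff_general
    (p : ℕ)
    (H : Type*) [Group H] (A : Type*) [AddCommGroup A]
    (ρ : H →* Multiplicative (AddAut A)) (φ : H → H → A)
    (hφ1 : ∀ h : H, φ 1 h = 0)
    [grp : Group (A × H)]
    (hmul : ∀ (a b : A) (h k : H), (a, h) * (b, k) = (a + (ρ h).toAdd b + φ h k, h * k))
    (hone : (1 : A × H) = (0, 1)) :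
    (∀ g : A × H, g ^ p = 1) ↔
      ((∀ h : H, h ^ p = 1) ∧
        (∀ (h : H) (a : A), ∑ i ∈ Finset.range p, (ρ (h ^ i)).toAdd a = 0) ∧
        (∀ h : H, ∑ i ∈ Finset.Icc 1 (p - 1), φ (h ^ i) h = 0)) := by
  have pow_eq_one_iff (a : A) (h : H) : (a, h) ^ p = 1 ↔
      ∑ i ∈ Finset.range p, (ρ (h ^ i)).toAdd a + ∑ i ∈ Finset.Icc 1 (p - 1), φ (h ^ i) h = 0 ∧
        h ^ p = 1 := by
    rw [realizing_pow_eq ρ φ hmul hone, hone, Prod.mk.injEq,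
      Finset.sum_range_eq_sum_Icc_pred (f := fun i ↦ φ (h ^ i) h) (by simp [hφ1])]
  constructor
  · intro hg
    have hH (h : H) := (pow_eq_one_iff 0 h).1 (hg (0, h))
    simp only [map_zero, Finset.sum_const_zero, zero_add] at hH
    refine ⟨fun h ↦ (hH h).2, fun h a ↦ ?_, fun h ↦ (hH h).1⟩
    simpa only [(hH h).1, add_zero] using ((pow_eq_one_iff a h).1 (hg (a, h))).1
  · rintro ⟨hH, hρ, hφ⟩ ⟨a, h⟩
    exact (pow_eq_one_iff a h).2 ⟨by rw [hρ, hφ, add_zero], hH h⟩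

/-- Let `p` be a prime and `G = A ⋊_{ρ,φ} H` the realizing group of a datum `(H, A, ρ, φ)`,
modeled by a group structure on `A × H` with `(a,h) * (b,k) = (a + h ▹ b + φ h k, h * k)` and
identity `(0,1)`. Then every `g ∈ G` satisfies `g ^ p = 1` iff: (i) `h ^ p = 1` for all `h`;
(ii) `∑_{i=0}^{p-1} (h^i) ▹ a = 0` for all `h, a`; (iii) `∑_{i=1}^{p-1} φ (h^i) h = 0`
for all `h`. -/
theorem realizing_group_exponent_p_iff
    (p : ℕ) (hp : p.Prime)
    (H : Type*) [Group H] (A : Type*) [AddCommGroup A]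
    (ρ : H →* Multiplicative (AddAut A)) (φ : H → H → A)
    (hφ1 : ∀ h : H, φ 1 h = 0) (hφ2 : ∀ h : H, φ h 1 = 0)
    [grp : Group (A × H)]
    (hmul : ∀ (a b : A) (h k : H), (a, h) * (b, k) = (a + (ρ h).toAdd b + φ h k, h * k))
    (hone : (1 : A × H) = (0, 1)) :
    (∀ g : A × H, g ^ p = 1) ↔
      ((∀ h : H, h ^ p = 1) ∧
        (∀ (h : H) (a : A), ∑ i ∈ Finset.range p, (ρ (h ^ i)).toAdd a = 0) ∧
        (∀ h : H, ∑ i ∈ Finset.Icc 1 (p - 1), φ (h ^ i) h = 0)) :=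
  realizing_group_exponent_p_iff_general p H A ρ φ hφ1 (grp := grp) hmul hone
end

section
/- Let H be a commutative group and G = A ⋊_{ρ,φ} H the realizing group of a datum (H, A, ρ, φ). Let S be the additive subgroup of A generated by the set {k ▹ b − b : k ∈ H, b ∈ A} ∪ {φ k h − φ h k : h, k ∈ H}. Then the commutator subgroup of G is exactly {(a, 1) : a ∈ S}; that is, an element (a,h) of G lies in the commutator subgroup if and only if h = 1 and a ∈ S. -/
/-!
Since `H` is commutative, `xy` and `yx` lie over the same element of `H`, so every commutator
`⁅x, y⁆ = xy (yx)⁻¹` has the form `(c, 1)`; explicitly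
`⁅(a, h), (b, k)⁆ = ((h ▹ b - b) - (k ▹ a - a) + (φ h k - φ k h), 1)`, whose first coordinate
lies in `S`. Conversely the generators of `S` are the commutators `⁅(0, k), (b, 1)⁆` and
`⁅(0, k), (0, h)⁆`, and `a ↦ (a, 1)` is a homomorphism `A → G`.
-/

namespace RealizingGroup

open scoped commutatorElement

variable {H A : Type*} [AddCommGroup A]

def commutatorGenerators [Monoid H] (ρ : H →* Multiplicative (AddAut A)) (φ : H → H → A) :
    Set A :=
  {x | ∃ (k : H) (b : A), x = Multiplicative.toAdd (ρ k) b - b} ∪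
    {x | ∃ h' k : H, x = φ k h' - φ h' k}

variable [Group (A × H)]

section Monoid

variable [Monoid H] {ρ : H →* Multiplicative (AddAut A)} {φ : H → H → A}
  (hmul : ∀ (a b : A) (h k : H),
    (a, h) * (b, k) = (a + Multiplicative.toAdd (ρ h) b + φ h k, h * k))
include hmul

def inclusion (hφ : φ 1 1 = 0) : Multiplicative A →* A × H :=
  MonoidHom.mk' (fun a => (Multiplicative.toAdd a, 1)) fun a b => by
    rw [hmul, hφ, map_one, toAdd_one, AddAut.zero_apply, add_zero, mul_one, toAdd_mul]

@[simp]
theorem inclusion_apply (hφ : φ 1 1 = 0) (a : Multiplicative A) :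
    inclusion hmul hφ a = (Multiplicative.toAdd a, 1) :=
  rfl

theorem mk_eq_mk_one_mul (hφ1 : ∀ h, φ 1 h = 0) (c d : A) (g : H) :
    ((c, g) : A × H) = (c - d, 1) * (d, g) := by
  rw [hmul, hφ1, map_one, toAdd_one, AddAut.zero_apply, sub_add_cancel, add_zero, one_mul]

theorem mk_mul_inv_mk (hφ1 : ∀ h, φ 1 h = 0) (c d : A) (g : H) :
    ((c, g) : A × H) * (d, g)⁻¹ = (c - d, 1) :=
  mul_inv_eq_of_eq_mul (mk_eq_mk_one_mul hmul hφ1 c d g)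

end Monoid

section CommGroup

variable [CommGroup H] {ρ : H →* Multiplicative (AddAut A)} {φ : H → H → A}
  (hmul : ∀ (a b : A) (h k : H),
    (a, h) * (b, k) = (a + Multiplicative.toAdd (ρ h) b + φ h k, h * k))
  (hφ1 : ∀ h, φ 1 h = 0)
include hmul hφ1

theorem commutatorElement_mk (a b : A) (h k : H) :
    ⁅((a, h) : A × H), (b, k)⁆ =
      (a + Multiplicative.toAdd (ρ h) b + φ h k
        - (b + Multiplicative.toAdd (ρ k) a + φ k h), 1) := by
  rw [commutatorElement_def, mul_assoc, ← mul_inv_rev, hmul b a k h, hmul a b h k, mul_comm k h,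
    mk_mul_inv_mk hmul hφ1]

theorem commutator_le_map_closure :
    commutator (A × H) ≤
      (AddSubgroup.closure (commutatorGenerators ρ φ)).toSubgroup.map (inclusion hmul (hφ1 1)) := by
  rw [commutator_def, Subgroup.commutator_le]
  rintro ⟨a, h⟩ - ⟨b, k⟩ -
  rw [commutatorElement_mk hmul hφ1]
  refine ⟨.ofAdd (_ - _), ?_, rfl⟩
  show _ - _ ∈ AddSubgroup.closure (commutatorGenerators ρ φ)
  have hsplit : a + Multiplicative.toAdd (ρ h) b + φ h k
      - (b + Multiplicative.toAdd (ρ k) a + φ k h) =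
      (Multiplicative.toAdd (ρ h) b - b) - (Multiplicative.toAdd (ρ k) a - a)
        + (φ h k - φ k h) := by
    abel
  rw [hsplit]
  exact add_mem (sub_mem (AddSubgroup.subset_closure (.inl ⟨h, b, rfl⟩))
    (AddSubgroup.subset_closure (.inl ⟨k, a, rfl⟩))) (AddSubgroup.subset_closure (.inr ⟨k, h, rfl⟩))

theorem commutatorElement_mk_zero_mk_zero (k h : H) :
    ⁅((0, k) : A × H), (0, h)⁆ = (φ k h - φ h k, 1) := by
  simp [commutatorElement_mk hmul hφ1]

variable (hφ2 : ∀ h, φ h 1 = 0)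
include hφ2

theorem commutatorElement_mk_zero_mk_one (k : H) (b : A) :
    ⁅((0, k) : A × H), (b, (1 : H))⁆ = (Multiplicative.toAdd (ρ k) b - b, 1) := by
  simp [commutatorElement_mk hmul hφ1, hφ1, hφ2]

theorem map_closure_le_commutator :
    (AddSubgroup.closure (commutatorGenerators ρ φ)).toSubgroup.map (inclusion hmul (hφ1 1)) ≤
      commutator (A × H) := by
  rw [Subgroup.map_le_iff_le_comap, AddSubgroup.toSubgroup_closure, Subgroup.closure_le]
  rintro x (⟨k, b, hx⟩ | ⟨h, k, hx⟩) <;>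
    simp only [SetLike.mem_coe, Subgroup.mem_comap, inclusion_apply, hx]
  · rw [← commutatorElement_mk_zero_mk_one hmul hφ1 hφ2]
    exact Subgroup.commutator_mem_commutator (Subgroup.mem_top _) (Subgroup.mem_top _)
  · rw [← commutatorElement_mk_zero_mk_zero hmul hφ1]
    exact Subgroup.commutator_mem_commutator (Subgroup.mem_top _) (Subgroup.mem_top _)

theorem commutator_eq_map_closure :
    commutator (A × H) =
      (AddSubgroup.closure (commutatorGenerators ρ φ)).toSubgroup.map (inclusion hmul (hφ1 1)) :=
  le_antisymm (commutator_le_map_closure hmul hφ1) (map_closure_le_commutator hmul hφ1 hφ2)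

end CommGroup

end RealizingGroup

theorem realizing_group_commutator_subgroup_general
    (H : Type*) [CommGroup H] (A : Type*) [AddCommGroup A]
    (ρ : H →* Multiplicative (AddAut A)) (φ : H → H → A)
    (hφ1 : ∀ h : H, φ 1 h = 0) (hφ2 : ∀ h : H, φ h 1 = 0)
    [grp : Group (A × H)]
    (hmul : ∀ (a b : A) (h k : H), (a, h) * (b, k) = (a + Multiplicative.toAdd (ρ h) b + φ h k, h * k)) :
    ∀ (a : A) (h : H),
      (a, h) ∈ commutator (A × H) ↔
        (h = 1 ∧ a ∈ AddSubgroup.closure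
          ({x : A | ∃ (k : H) (b : A), x = Multiplicative.toAdd (ρ k) b - b} ∪
            {x : A | ∃ h' k : H, x = φ k h' - φ h' k})) := by
  intro a h
  rw [RealizingGroup.commutator_eq_map_closure hmul hφ1 hφ2]
  constructor
  · rintro ⟨x, hx, hxah⟩
    obtain ⟨rfl, rfl⟩ := Prod.mk.inj hxah
    exact ⟨rfl, hx⟩
  · rintro ⟨rfl, ha⟩
    exact ⟨Multiplicative.ofAdd a, ha, rfl⟩

/-- Let `H` be a commutative group and `G = A ⋊_{ρ,φ} H` the realizing group of a datum
`(H, A, ρ, φ)`, modeled by a group structure on `A × H` with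
`(a,h) * (b,k) = (a + h ▹ b + φ h k, h * k)` and identity `(0,1)`. Let `S` be the additive
subgroup of `A` generated by `{k ▹ b - b}` and `{φ k h - φ h k}`. Then `(a, h)` lies in the
commutator subgroup of `G` iff `h = 1` and `a ∈ S`. -/
theorem realizing_group_commutator_subgroup
    (H : Type*) [CommGroup H] (A : Type*) [AddCommGroup A]
    (ρ : H →* Multiplicative (AddAut A)) (φ : H → H → A)
    (hφ1 : ∀ h : H, φ 1 h = 0) (hφ2 : ∀ h : H, φ h 1 = 0)
    [grp : Group (A × H)]
    (hmul : ∀ (a b : A) (h k : H), (a, h) * (b, k) = (a + Multiplicative.toAdd (ρ h) b + φ h k, h * k))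
    (hone : (1 : A × H) = (0, 1)) :
    ∀ (a : A) (h : H),
      (a, h) ∈ commutator (A × H) ↔
        (h = 1 ∧ a ∈ AddSubgroup.closure
          ({x : A | ∃ (k : H) (b : A), x = Multiplicative.toAdd (ρ k) b - b} ∪
            {x : A | ∃ h' k : H, x = φ k h' - φ h' k})) :=
  realizing_group_commutator_subgroup_general H A ρ φ hφ1 hφ2 (grp := grp) hmul
end

section
/- Let H be a commutative group and G = A ⋊_{ρ,φ} H the realizing group of a datum (H, A, ρ, φ). Then the center of G is exactly the set of pairs (a, k) ∈ A × H such that k ▹ b = b for every b ∈ A, and φ k h − φ h k = h ▹ a − a for every h ∈ H. -/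
/-!
As `H` is commutative, `(a, k)` and `(b, h)` commute exactly when their `A`-components agree:
`a + k ▹ b + φ k h = b + h ▹ a + φ h k`. Taking `h = 1` (where `φ` vanishes) shows that `k` acts
trivially, and then `b = 0` leaves the condition on `φ`.
-/

namespace RealizingGroup

variable {H A : Type*} [AddCommGroup A]

theorem forall_commute_eq_iff [MulOneClass H] (ρ : H →* Multiplicative (AddAut A))
    (φ : H → H → A) (hφ1 : ∀ h : H, φ 1 h = 0) (hφ2 : ∀ h : H, φ h 1 = 0) (a : A) (k : H) :
    (∀ (b : A) (h : H), a + ρ k b + φ k h = b + ρ h a + φ h k) ↔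
      ((∀ b : A, ρ k b = b) ∧ ∀ h : H, φ k h - φ h k = ρ h a - a) := by
  constructor
  · intro heq
    have hfix : ∀ b : A, ρ k b = b := fun b => by
      have := heq b 1
      simp only [hφ1, hφ2, map_one, toAdd_one, AddAut.zero_apply] at this
      linear_combination (norm := abel) this
    refine ⟨hfix, fun h => ?_⟩
    have := heq 0 h
    simp only [hfix] at this
    linear_combination (norm := abel) this
  · rintro ⟨hfix, hφ⟩ b h
    rw [hfix b]
    linear_combination (norm := abel) hφ h

theorem commute_iff [CommGroup H] (ρ : H →* Multiplicative (AddAut A)) (φ : H → H → A)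
    [Group (A × H)]
    (hmul : ∀ (a b : A) (h k : H), (a, h) * (b, k) = (a + ρ h b + φ h k, h * k))
    (a b : A) (k h : H) :
    Commute (a, k) (b, h) ↔ a + ρ k b + φ k h = b + ρ h a + φ h k := by
  rw [Commute, SemiconjBy, hmul, hmul, Prod.mk.injEq]
  exact and_iff_left (mul_comm k h)

end RealizingGroup

open RealizingGroup in
theorem realizing_group_center_general
    (H : Type*) [CommGroup H] (A : Type*) [AddCommGroup A]
    (ρ : H →* Multiplicative (AddAut A)) (φ : H → H → A)
    (hφ1 : ∀ h : H, φ 1 h = 0) (hφ2 : ∀ h : H, φ h 1 = 0)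
    [grp : Group (A × H)]
    (hmul : ∀ (a b : A) (h k : H), (a, h) * (b, k) = (a + ρ h b + φ h k, h * k)) :
    ∀ (a : A) (k : H),
      (a, k) ∈ Subgroup.center (A × H) ↔
        ((∀ b : A, ρ k b = b) ∧ ∀ h : H, φ k h - φ h k = ρ h a - a) := by
  intro a k
  rw [← forall_commute_eq_iff ρ φ hφ1 hφ2, Subgroup.mem_center_iff, Prod.forall]
  exact forall₂_congr fun b h => (commute_iff ρ φ hmul b a h k).trans eq_comm

/-- Let `H` be a commutative group and `G = A ⋊_{ρ,φ} H` the realizing group of a datum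
`(H, A, ρ, φ)`, modeled by a group structure on `A × H` with
`(a,h) * (b,k) = (a + h ▹ b + φ h k, h * k)` and identity `(0,1)`. Then the center of `G`
consists exactly of the pairs `(a, k)` with `k ▹ b = b` for every `b ∈ A` and
`φ k h - φ h k = h ▹ a - a` for every `h ∈ H`. -/
theorem realizing_group_center
    (H : Type*) [CommGroup H] (A : Type*) [AddCommGroup A]
    (ρ : H →* Multiplicative (AddAut A)) (φ : H → H → A)
    (hφ1 : ∀ h : H, φ 1 h = 0) (hφ2 : ∀ h : H, φ h 1 = 0)
    [grp : Group (A × H)]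
    (hmul : ∀ (a b : A) (h k : H), (a, h) * (b, k) = (a + ρ h b + φ h k, h * k))
    (hone : (1 : A × H) = (0, 1)) :
    ∀ (a : A) (k : H),
      (a, k) ∈ Subgroup.center (A × H) ↔
        ((∀ b : A, ρ k b = b) ∧ ∀ h : H, φ k h - φ h k = ρ h a - a) :=
  realizing_group_center_general H A ρ φ hφ1 hφ2 (grp := grp) hmul
end

section
/- Let G = A ⋊_{ρ,φ} H and G̃ = Ã ⋊_{ρ̃,φ̃} H̃ be the realizing groups of two data (H, A, ρ, φ) and (H̃, Ã, ρ̃, φ̃). Then the following are equivalent: (a) there exist a group isomorphism σ_H : H ≃* H̃, an additive group isomorphism σ_A : A ≃+ Ã, and a map f : H → Ã such that σ_A (h ▹ a) = (σ_H h) ▹̃ (σ_A a) for all h ∈ H, a ∈ A, and φ̃ (σ_H h) (σ_H k) − σ_A (φ h k) = (σ_H h) ▹̃ (f k) − f (h * k) + f h for all h, k ∈ H (i.e., the two data are equivalent); (b) there exists a group isomorphism σ : G ≃* G̃ that maps the subgroup {(a, 1) : a ∈ A} onto the subgroup {(ã, 1) : ã ∈ Ã}. -/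
/-!
The subgroup `{(a, 1)}` is the kernel of the projection `A × H → H`, so an isomorphism `σ`
preserving it restricts to `σ_A : A ≃+ Ã` on the kernels and induces `σ_H : H ≃* H̃` on the
quotients. Writing `σ (0, h) = (-f h, σ_H h)`, applying `σ` to the identities
`(0, h) (a, 1) = (h ▹ a, 1) (0, h)` and `(φ h k, 1) (0, h k) = (0, h) (0, k)` gives the
compatibility of the actions and the cocycle relation. Conversely, these two relations are exactly
what makes `(a, h) ↦ (σ_A a - f h, σ_H h)` multiplicative.
-/

structure IsRealizingGroup {H A : Type*} [Group H] [AddCommGroup A] [Group (A × H)]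
    (ρ : H →* Multiplicative (AddAut A)) (φ : H → H → A) : Prop where
  mul_def : ∀ x y : A × H, x * y = (x.1 + (ρ x.2).toAdd y.1 + φ x.2 y.2, x.2 * y.2)
  factorSet_one_left : ∀ h : H, φ 1 h = 0
  factorSet_one_right : ∀ h : H, φ h 1 = 0

theorem Equiv.snd_apply_mk_one_of_image_eq {α β H H' : Type*} [One H] [One H']
    (e : α × H ≃ β × H') (he : ⇑e '' {x | x.2 = 1} = {y | y.2 = 1}) (a : α) :
    (e (a, 1)).2 = 1 :=
  (Set.ext_iff.mp he (e (a, 1))).mp ⟨(a, 1), rfl, rfl⟩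

theorem Equiv.image_symm_setOf_snd_eq_one {α β H H' : Type*} [One H] [One H']
    (e : α × H ≃ β × H') (he : ⇑e '' {x | x.2 = 1} = {y | y.2 = 1}) :
    ⇑e.symm '' {y | y.2 = 1} = {x : α × H | x.2 = 1} := by
  rw [← he, e.symm_image_image]

theorem Equiv.image_setOf_snd_eq_one {α β H H' : Type*} [Monoid H] [Monoid H']
    (e : α × H ≃ β × H') (σH : H ≃* H') (he : ∀ x, (e x).2 = σH x.2) :
    ⇑e '' {x | x.2 = 1} = {y | y.2 = 1} := by
  ext y
  rw [e.image_eq_preimage_symm, Set.mem_preimage, Set.mem_ofPred_eq, Set.mem_ofPred_eq,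
    ← map_eq_one_iff σH σH.injective, ← he, e.apply_symm_apply]

namespace IsRealizingGroup

variable {H A H' A' : Type*} [Group H] [AddCommGroup A] [Group (A × H)]
  [Group H'] [AddCommGroup A'] [Group (A' × H')]
  {ρ : H →* Multiplicative (AddAut A)} {φ : H → H → A}
  {ρ' : H' →* Multiplicative (AddAut A')} {φ' : H' → H' → A'}

theorem snd_mul (hG : IsRealizingGroup ρ φ) (x y : A × H) : (x * y).2 = x.2 * y.2 := by
  rw [hG.mul_def]

theorem mk_one_mul (hG : IsRealizingGroup ρ φ) (a : A) (x : A × H) :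
    (a, 1) * x = (a + x.1, x.2) := by
  simp [hG.mul_def, hG.factorSet_one_left]

theorem mul_mk_one (hG : IsRealizingGroup ρ φ) (x : A × H) (b : A) :
    x * (b, 1) = (x.1 + (ρ x.2).toAdd b, x.2) := by
  simp [hG.mul_def, hG.factorSet_one_right]

section Maps

variable {H A H' A' F : Type*} [FunLike F (A × H) (A' × H')]

def kernelMap [One H] (σ : F) (a : A) : A' := (σ (a, 1)).1

def quotientMap [Zero A] (σ : F) (h : H) : H' := (σ (0, h)).2

def sectionOffset [Zero A] [Neg A'] (σ : F) (h : H) : A' := -(σ (0, h)).1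

theorem map_mk_one [One H] [One H'] {σ : F} (hK : ∀ a : A, (σ (a, 1)).2 = 1) (a : A) :
    σ (a, 1) = (kernelMap σ a, 1) :=
  Prod.ext rfl (hK a)

theorem kernelMap_symm_kernelMap [One H] [One H'] [Mul (A × H)] [Mul (A' × H')]
    (σ : A × H ≃* A' × H') (hK : ∀ a : A, (σ (a, 1)).2 = 1)
    (a : A) : kernelMap σ.symm (kernelMap σ a) = a := by
  rw [kernelMap, ← map_mk_one hK, MulEquiv.symm_apply_apply]

end Maps

section MapData

variable {F : Type*} [FunLike F (A × H) (A' × H')] [MulHomClass F (A × H) (A' × H')]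

theorem snd_map (hG : IsRealizingGroup ρ φ) (hG' : IsRealizingGroup ρ' φ') {σ : F}
    (hK : ∀ a : A, (σ (a, 1)).2 = 1) (x : A × H) : (σ x).2 = quotientMap σ x.2 := by
  obtain ⟨a, h⟩ := x
  rw [show σ (a, h) = σ (a, 1) * σ (0, h) by rw [← map_mul, hG.mk_one_mul, add_zero],
    hG'.snd_mul, hK, one_mul]
  rfl

theorem kernelMap_add (hG : IsRealizingGroup ρ φ) (hG' : IsRealizingGroup ρ' φ') {σ : F}
    (hK : ∀ a : A, (σ (a, 1)).2 = 1) (a b : A) :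
    kernelMap σ (a + b) = kernelMap σ a + kernelMap σ b := by
  have := congrArg Prod.fst (map_mul σ (a, 1) (b, 1))
  rw [hG.mk_one_mul, map_mk_one hK a, map_mk_one hK b, hG'.mk_one_mul] at this
  exact this

theorem quotientMap_mul (hG : IsRealizingGroup ρ φ) (hG' : IsRealizingGroup ρ' φ') {σ : F}
    (hK : ∀ a : A, (σ (a, 1)).2 = 1) (h k : H) :
    quotientMap σ (h * k) = quotientMap σ h * quotientMap σ k := by
  have := congrArg Prod.snd (map_mul σ (0, h) (0, k))
  rw [snd_map hG hG' hK, hG.snd_mul, hG'.snd_mul] at this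
  exact this

theorem kernelMap_act (hG : IsRealizingGroup ρ φ) (hG' : IsRealizingGroup ρ' φ') {σ : F}
    (hK : ∀ a : A, (σ (a, 1)).2 = 1) (h : H) (a : A) :
    kernelMap σ ((ρ h).toAdd a) = (ρ' (quotientMap σ h)).toAdd (kernelMap σ a) := by
  have hcomm : ((0, h) : A × H) * (a, 1) = ((ρ h).toAdd a, 1) * (0, h) := by
    rw [hG.mul_mk_one, hG.mk_one_mul, zero_add, add_zero]
  have := congrArg Prod.fst (congrArg σ hcomm)
  rw [map_mul, map_mul, map_mk_one hK, map_mk_one hK, hG'.mul_mk_one, hG'.mk_one_mul,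
    add_comm (kernelMap σ _)] at this
  exact (add_left_cancel this).symm

theorem factorSet_sub_kernelMap (hG : IsRealizingGroup ρ φ) (hG' : IsRealizingGroup ρ' φ')
    {σ : F} (hK : ∀ a : A, (σ (a, 1)).2 = 1) (h k : H) :
    φ' (quotientMap σ h) (quotientMap σ k) - kernelMap σ (φ h k) =
      (ρ' (quotientMap σ h)).toAdd (sectionOffset σ k) - sectionOffset σ (h * k) +
        sectionOffset σ h := by
  have hfac : ((φ h k, 1) : A × H) * (0, h * k) = (0, h) * (0, k) := by
    rw [hG.mk_one_mul, hG.mul_def]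
    simp
  have := congrArg Prod.fst (congrArg σ hfac)
  rw [map_mul, map_mul, map_mk_one hK, hG'.mk_one_mul, hG'.mul_def] at this
  dsimp only at this
  simp only [quotientMap, sectionOffset, map_neg]
  rw [eq_sub_of_add_eq' this.symm]
  abel

end MapData

section MulEquiv

theorem quotientMap_symm_quotientMap (hG : IsRealizingGroup ρ φ) (hG' : IsRealizingGroup ρ' φ')
    (σ : A × H ≃* A' × H') (hK' : ∀ a : A', (σ.symm (a, 1)).2 = 1) (h : H) :
    quotientMap σ.symm (quotientMap σ h) = h := by
  calc quotientMap σ.symm (quotientMap σ h) = (σ.symm (σ (0, h))).2 := (snd_map hG' hG hK' _).symm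
    _ = h := by rw [MulEquiv.symm_apply_apply]

variable (hG : IsRealizingGroup ρ φ) (hG' : IsRealizingGroup ρ' φ') (σ : A × H ≃* A' × H')
  (hK : ∀ a : A, (σ (a, 1)).2 = 1) (hK' : ∀ a : A', (σ.symm (a, 1)).2 = 1)

def kernelEquiv : A ≃+ A' where
  toFun := kernelMap σ
  invFun := kernelMap σ.symm
  left_inv := kernelMap_symm_kernelMap σ hK
  right_inv := kernelMap_symm_kernelMap σ.symm hK'
  map_add' := kernelMap_add hG hG' hK

def quotientEquiv : H ≃* H' where
  toFun := quotientMap σ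
  invFun := quotientMap σ.symm
  left_inv := quotientMap_symm_quotientMap hG hG' σ hK'
  right_inv := quotientMap_symm_quotientMap hG' hG σ.symm hK
  map_mul' := quotientMap_mul hG hG' hK

end MulEquiv

def mulEquivOfDataEquiv (hG : IsRealizingGroup ρ φ) (hG' : IsRealizingGroup ρ' φ')
    (σH : H ≃* H') (σA : A ≃+ A') (f : H → A')
    (hact : ∀ (h : H) (a : A), σA ((ρ h).toAdd a) = (ρ' (σH h)).toAdd (σA a))
    (hcoc : ∀ h k : H, φ' (σH h) (σH k) - σA (φ h k) =
      (ρ' (σH h)).toAdd (f k) - f (h * k) + f h) :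
    A × H ≃* A' × H' where
  toFun x := (σA x.1 - f x.2, σH x.2)
  invFun y := (σA.symm (y.1 + f (σH.symm y.2)), σH.symm y.2)
  left_inv x := by simp
  right_inv y := by simp
  map_mul' x y := by
    rw [hG.mul_def, hG'.mul_def]
    refine Prod.ext ?_ (map_mul σH x.2 y.2)
    dsimp only
    rw [sub_eq_iff_eq_add.mp (hcoc x.2 y.2), map_add, map_add, hact, map_sub]
    abel

end IsRealizingGroup

theorem data_equivalent_iff_iso_preserving_kernel_general
    (H : Type*) [Group H] (A : Type*) [AddCommGroup A]
    (ρ : H →* Multiplicative (AddAut A)) (φ : H → H → A)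
    (hφ1 : ∀ h : H, φ 1 h = 0) (hφ2 : ∀ h : H, φ h 1 = 0)
    (H' : Type*) [Group H'] (A' : Type*) [AddCommGroup A']
    (ρ' : H' →* Multiplicative (AddAut A')) (φ' : H' → H' → A')
    (hφ1' : ∀ h : H', φ' 1 h = 0) (hφ2' : ∀ h : H', φ' h 1 = 0)
    [grp : Group (A × H)]
    (hmul : ∀ (a b : A) (h k : H), (a, h) * (b, k) = (a + (ρ h).toAdd b + φ h k, h * k))
    [grp' : Group (A' × H')]
    (hmul' : ∀ (a b : A') (h k : H'), (a, h) * (b, k) = (a + (ρ' h).toAdd b + φ' h k, h * k)) :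
    (∃ (σH : H ≃* H') (σA : A ≃+ A') (f : H → A'),
        (∀ (h : H) (a : A), σA ((ρ h).toAdd a) = (ρ' (σH h)).toAdd (σA a)) ∧
        (∀ h k : H, φ' (σH h) (σH k) - σA (φ h k) =
          (ρ' (σH h)).toAdd (f k) - f (h * k) + f h)) ↔
      (∃ σ : (A × H) ≃* (A' × H'),
        (⇑σ) '' {x : A × H | x.2 = 1} = {y : A' × H' | y.2 = 1}) := by
  have hG : IsRealizingGroup ρ φ := ⟨fun x y => hmul x.1 y.1 x.2 y.2, hφ1, hφ2⟩
  have hG' : IsRealizingGroup ρ' φ' := ⟨fun x y => hmul' x.1 y.1 x.2 y.2, hφ1', hφ2'⟩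
  constructor
  · rintro ⟨σH, σA, f, hact, hcoc⟩
    let σ := hG.mulEquivOfDataEquiv hG' σH σA f hact hcoc
    exact ⟨σ, σ.toEquiv.image_setOf_snd_eq_one σH fun _ => rfl⟩
  · rintro ⟨σ, hσ⟩
    have hK := σ.toEquiv.snd_apply_mk_one_of_image_eq hσ
    have hK' := σ.symm.toEquiv.snd_apply_mk_one_of_image_eq
      (σ.toEquiv.image_symm_setOf_snd_eq_one hσ)
    exact ⟨hG.quotientEquiv hG' σ hK hK', hG.kernelEquiv hG' σ hK hK',
      IsRealizingGroup.sectionOffset σ, hG.kernelMap_act hG' hK, hG.factorSet_sub_kernelMap hG' hK⟩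

/-- Two group extension data `(H, A, ρ, φ)` and `(H', A', ρ', φ')` (with realizing groups
modeled by group structures on `A × H` resp. `A' × H'`) are equivalent iff there is a group
isomorphism of the realizing groups mapping the subgroup `{(a, 1)}` onto `{(a', 1)}`. -/
theorem data_equivalent_iff_iso_preserving_kernel
    (H : Type*) [Group H] (A : Type*) [AddCommGroup A]
    (ρ : H →* Multiplicative (AddAut A)) (φ : H → H → A)
    (hφ1 : ∀ h : H, φ 1 h = 0) (hφ2 : ∀ h : H, φ h 1 = 0)
    (H' : Type*) [Group H'] (A' : Type*) [AddCommGroup A']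
    (ρ' : H' →* Multiplicative (AddAut A')) (φ' : H' → H' → A')
    (hφ1' : ∀ h : H', φ' 1 h = 0) (hφ2' : ∀ h : H', φ' h 1 = 0)
    [grp : Group (A × H)]
    (hmul : ∀ (a b : A) (h k : H), (a, h) * (b, k) = (a + (ρ h).toAdd b + φ h k, h * k))
    (hone : (1 : A × H) = (0, 1))
    [grp' : Group (A' × H')]
    (hmul' : ∀ (a b : A') (h k : H'), (a, h) * (b, k) = (a + (ρ' h).toAdd b + φ' h k, h * k))
    (hone' : (1 : A' × H') = (0, 1)) :
    (∃ (σH : H ≃* H') (σA : A ≃+ A') (f : H → A'),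
        (∀ (h : H) (a : A), σA ((ρ h).toAdd a) = (ρ' (σH h)).toAdd (σA a)) ∧
        (∀ h k : H, φ' (σH h) (σH k) - σA (φ h k) =
          (ρ' (σH h)).toAdd (f k) - f (h * k) + f h)) ↔
      (∃ σ : (A × H) ≃* (A' × H'),
        (⇑σ) '' {x : A × H | x.2 = 1} = {y : A' × H' | y.2 = 1}) :=
  data_equivalent_iff_iso_preserving_kernel_general H A ρ φ hφ1 hφ2 H' A' ρ' φ' hφ1' hφ2'
    (grp := grp) hmul (grp' := grp') hmul'
end

section
/- Let p be a prime, m ≥ 1, H = (Fin m → ZMod p), and A an additive commutative group with p • a = 0 for all a ∈ A. Given a family c : Fin m → Fin m → A, define φ : H → H → A by φ i j = ∑_r (((i r).val + (j r).val) / p) • c r r − ∑_{r < s} ((j r).val * (i s).val) • c r s (natural-number division and scalar multiplication). Then: (a) φ is a normalized 2-cocycle for the trivial action, i.e., φ 0 j = 0 = φ i 0 and φ j k − φ (i + j) k + φ i (j + k) − φ i j = 0 for all i, j, k ∈ H; (b) there exists f : H → A with φ i j = f j − f (i + j) + f i for all i, j ∈ H (i.e., φ is a 2-coboundary) if and only if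 φ is identically zero, which holds if and only if c r s = 0 for all r ≤ s. -/
/-!
The diagonal part of `φ` is a sum of carry cochains: the carry `(x.val + y.val) / p` of adding two
base-`p` digits is a cocycle, because adding three digits in either order carries
`(x.val + y.val + z.val) / p` in total. The off-diagonal part is `ZMod p`-bilinear, hence a cocycle.

A coboundary is symmetric, and `φ (e s) (e r) - φ (e r) (e s) = -c r s` for `r < s`. Summing a
coboundary along the cyclic group generated by `e r` telescopes to `p • f (e r) = 0`, whereas for
`φ` this sum is `c r r`, since exactly one of the additions `e r + k • e r`, `k < p`, carries.
-/

open Finset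

section Cocycle

variable {G A : Type*} [AddCommGroup G] [AddCommGroup A]

def IsAddTwoCocycle (φ : G → G → A) : Prop :=
  ∀ i j k, φ j k - φ (i + j) k + φ i (j + k) - φ i j = 0

def IsAddTwoCoboundary (φ : G → G → A) : Prop :=
  ∃ f : G → A, ∀ i j, φ i j = f j - f (i + j) + f i

theorem isAddTwoCocycle_iff {φ : G → G → A} :
    IsAddTwoCocycle φ ↔ ∀ i j k, φ j k + φ i (j + k) = φ (i + j) k + φ i j :=
  forall₃_congr fun i j k => by
    rw [← sub_eq_zero (a := φ j k + φ i (j + k))]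
    abel_nf

theorem IsAddTwoCocycle.sub {φ ψ : G → G → A} (hφ : IsAddTwoCocycle φ)
    (hψ : IsAddTwoCocycle ψ) : IsAddTwoCocycle fun i j => φ i j - ψ i j := fun i j k => by
  dsimp only
  rw [← sub_eq_zero.mpr ((hφ i j k).trans (hψ i j k).symm)]
  abel

theorem IsAddTwoCocycle.finset_sum {ι : Type*} (s : Finset ι) {φ : ι → G → G → A}
    (h : ∀ r ∈ s, IsAddTwoCocycle (φ r)) : IsAddTwoCocycle fun i j => ∑ r ∈ s, φ r i j :=
  fun i j k => by
    simp only [← sum_sub_distrib, ← sum_add_distrib]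
    exact sum_eq_zero fun r hr => h r hr i j k

theorem isAddTwoCocycle_of_biadditive {φ : G → G → A}
    (hl : ∀ i j k, φ (i + j) k = φ i k + φ j k)
    (hr : ∀ i j k, φ i (j + k) = φ i j + φ i k) : IsAddTwoCocycle φ :=
  fun i j k => by rw [hl, hr]; abel

theorem IsAddTwoCoboundary.apply_comm {φ : G → G → A} (h : IsAddTwoCoboundary φ) (i j : G) :
    φ i j = φ j i := by
  obtain ⟨f, hf⟩ := h
  rw [hf, hf, add_comm j]
  abel

theorem IsAddTwoCoboundary.sum_range_nsmul_eq_zero {φ : G → G → A} (h : IsAddTwoCoboundary φ)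
    {n : ℕ} {x : G} (hx : n • x = 0) (hA : ∀ a : A, n • a = 0) :
    ∑ k ∈ range n, φ x (k • x) = 0 := by
  obtain ⟨f, hf⟩ := h
  simp only [hf, ← succ_nsmul', sum_add_distrib, sum_range_sub' (fun k => f (k • x)), sum_const,
    card_range, zero_nsmul, hx, sub_self, hA, add_zero]

end Cocycle

theorem Nat.add_div_eq_add_mod_div {p : ℕ} (hp : 0 < p) (a b : ℕ) :
    (a + b) / p = (a + b % p) / p + b / p := by
  conv_lhs => rw [← Nat.mod_add_div b p, ← add_assoc]
  exact Nat.add_mul_div_left _ _ hp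

namespace ZMod

variable {p : ℕ}

def carry (x y : ZMod p) : ℕ := (x.val + y.val) / p

variable [NeZero p]

@[simp]
theorem carry_zero_left (y : ZMod p) : carry 0 y = 0 := by
  simp [carry, Nat.div_eq_of_lt (val_lt y)]

@[simp]
theorem carry_zero_right (x : ZMod p) : carry x 0 = 0 := by
  simp [carry, Nat.div_eq_of_lt (val_lt x)]

theorem carry_add_carry_add (x y z : ZMod p) :
    carry y z + carry x (y + z) = carry (x + y) z + carry x y := by
  have hp := NeZero.pos p
  simp only [carry, val_add]
  rw [add_comm (_ / p), ← Nat.add_div_eq_add_mod_div hp, add_comm ((x.val + y.val) % p),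
    ← Nat.add_div_eq_add_mod_div hp]
  ring_nf

theorem val_mul_val_nsmul {A : Type*} [AddCommGroup A] [Module (ZMod p) A] (x y : ZMod p)
    (a : A) : (x.val * y.val) • a = (x * y) • a := by
  simp only [← Nat.cast_smul_eq_nsmul (ZMod p), Nat.cast_mul, natCast_val, cast_id', id_eq]

theorem sum_range_carry_one [Fact (1 < p)] : ∑ k ∈ range p, carry (1 : ZMod p) k = 1 := by
  obtain ⟨n, rfl⟩ : ∃ n, p = n + 1 := Nat.exists_eq_add_one.mpr (NeZero.pos p)
  rw [sum_range_succ, sum_eq_zero fun k hk => ?_]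
  · rw [zero_add, carry, val_one, val_natCast_of_lt n.lt_succ_self, add_comm,
      Nat.div_self n.succ_pos]
  · have hk := mem_range.mp hk
    rw [carry, val_one, val_natCast_of_lt (by omega), Nat.div_eq_of_lt (by omega)]

end ZMod

section CochainFormula

open ZMod

variable {p : ℕ} {m : ℕ} {A : Type*} [AddCommGroup A]

variable (p) in
def cochainFormula (c : Fin m → Fin m → A) (i j : Fin m → ZMod p) : A :=
  (∑ r, carry (i r) (j r) • c r r) - ∑ r, ∑ s ∈ Ioi r, ((j r).val * (i s).val) • c r s

theorem cochainFormula_eq_zero {c : Fin m → Fin m → A} (hc : ∀ r s, r ≤ s → c r s = 0)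
    (i j : Fin m → ZMod p) : cochainFormula p c i j = 0 := by
  rw [cochainFormula, sum_eq_zero fun r _ => by rw [hc r r le_rfl, smul_zero],
    sum_eq_zero fun r _ => sum_eq_zero fun s hs => by rw [hc r s (mem_Ioi.mp hs).le, smul_zero],
    sub_zero]

variable [NeZero p]

theorem cochainFormula_zero_left (c : Fin m → Fin m → A) (j : Fin m → ZMod p) :
    cochainFormula p c 0 j = 0 := by
  simp [cochainFormula]

theorem cochainFormula_zero_right (c : Fin m → Fin m → A) (i : Fin m → ZMod p) :
    cochainFormula p c i 0 = 0 := by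
  simp [cochainFormula]

theorem isAddTwoCocycle_carry_nsmul {ι : Type*} (r : ι) (a : A) :
    IsAddTwoCocycle fun i j : ι → ZMod p => carry (i r) (j r) • a :=
  isAddTwoCocycle_iff.mpr fun i j k => by
    simp only [Pi.add_apply, ← add_nsmul, carry_add_carry_add]

variable [Module (ZMod p) A]

theorem isAddTwoCocycle_cochainFormula (c : Fin m → Fin m → A) :
    IsAddTwoCocycle (cochainFormula p c) := by
  refine .sub (.finset_sum _ fun r _ => isAddTwoCocycle_carry_nsmul r _)
    (.finset_sum _ fun r _ => .finset_sum _ fun s _ => isAddTwoCocycle_of_biadditive ?_ ?_) <;>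
  · intro i j k
    simp only [val_mul_val_nsmul, Pi.add_apply, mul_add, add_mul, add_smul]

theorem cochainFormula_single_single (c : Fin m → Fin m → A) (a b : Fin m) (x y : ZMod p) :
    cochainFormula p c (Pi.single a x) (Pi.single b y) =
      (if a = b then carry x y • c a a else 0) - if b < a then (y * x) • c b a else 0 := by
  have hdiag : ∑ r, carry ((Pi.single a x : Fin m → ZMod p) r)
      ((Pi.single b y : Fin m → ZMod p) r) • c r r =
      if a = b then carry x y • c a a else 0 := by
    split_ifs with hab
    · subst hab
      rw [sum_eq_single a (fun r _ hr => by simp [hr]) (by simp)]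
      simp
    · refine sum_eq_zero fun r _ => ?_
      by_cases hr : r = a
      · simp [hr, Ne.symm hab]
      · simp [hr]
  have hoff : ∑ r, ∑ s ∈ Ioi r,
      (((Pi.single b y : Fin m → ZMod p) r).val * ((Pi.single a x : Fin m → ZMod p) s).val) •
        c r s =
      if b < a then (y * x) • c b a else 0 := by
    simp only [val_mul_val_nsmul, Pi.single_apply, ite_mul, mul_ite, zero_mul, mul_zero, ite_smul,
      zero_smul, sum_ite_eq', mem_Ioi]
    rw [sum_eq_single b (fun r _ hr => by simp [hr]) (by simp)]
    simp
  rw [cochainFormula, hdiag, hoff]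

theorem IsAddTwoCoboundary.cochainFormula_coeff_eq_zero [Fact (1 < p)] {c : Fin m → Fin m → A}
    (h : IsAddTwoCoboundary (cochainFormula p c)) {r s : Fin m} (hrs : r ≤ s) : c r s = 0 := by
  rcases hrs.eq_or_lt with rfl | hlt
  · have := h.sum_range_nsmul_eq_zero (ZModModule.char_nsmul_eq_zero p (Pi.single r 1))
      (ZModModule.char_nsmul_eq_zero p)
    simpa only [← Pi.single_nsmul, nsmul_one, cochainFormula_single_single, if_pos, lt_irrefl,
      if_false, sub_zero, sum_nsmul_assoc, sum_range_carry_one, one_nsmul] using this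
  · have := h.apply_comm (Pi.single s 1) (Pi.single r 1)
    simpa [cochainFormula_single_single, hlt, hlt.ne, hlt.ne', lt_asymm hlt] using this

end CochainFormula

theorem cochain_formula_cocycle_and_coboundary_general
    (p : ℕ) (hp : p.Prime) (m : ℕ)
    (A : Type*) [AddCommGroup A] (hA : ∀ a : A, p • a = 0)
    (c : Fin m → Fin m → A)
    (φ : (Fin m → ZMod p) → (Fin m → ZMod p) → A)
    (hφ : ∀ i j, φ i j =
      (∑ r, (((i r).val + (j r).val) / p) • c r r)
        - ∑ r, ∑ s ∈ Finset.Ioi r, ((j r).val * (i s).val) • c r s) :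
    ((∀ j, φ 0 j = 0) ∧ (∀ i, φ i 0 = 0) ∧
      (∀ i j k, φ j k - φ (i + j) k + φ i (j + k) - φ i j = 0)) ∧
    ((∃ f : (Fin m → ZMod p) → A, ∀ i j, φ i j = f j - f (i + j) + f i) ↔
      (∀ i j, φ i j = 0)) ∧
    ((∀ i j, φ i j = 0) ↔ ∀ r s : Fin m, r ≤ s → c r s = 0) := by
  have : Fact (1 < p) := ⟨hp.one_lt⟩
  let : Module (ZMod p) A := AddCommGroup.zmodModule hA
  obtain rfl : φ = cochainFormula p c := funext₂ hφ
  have hcob : (∀ i j, cochainFormula p c i j = 0) → IsAddTwoCoboundary (cochainFormula p c) :=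
    fun h => ⟨0, by simpa using h⟩
  exact ⟨⟨cochainFormula_zero_left c, cochainFormula_zero_right c,
      isAddTwoCocycle_cochainFormula c⟩,
    ⟨fun h => cochainFormula_eq_zero fun _ _ => IsAddTwoCoboundary.cochainFormula_coeff_eq_zero h,
      hcob⟩,
    ⟨fun h _ _ => (hcob h).cochainFormula_coeff_eq_zero, cochainFormula_eq_zero⟩⟩

/-- Let `p` be a prime, `m ≥ 1`, `H = Fin m → ZMod p`, and `A` an additive commutative group
with `p • a = 0` for all `a`. Given `c : Fin m → Fin m → A`, define
`φ i j = ∑_r ((i r).val + (j r).val) / p • c r r - ∑_{r < s} ((j r).val * (i s).val) • c r s`.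
Then (a) `φ` is a normalized 2-cocycle for the trivial action, and (b) `φ` is a 2-coboundary
iff it is identically zero, iff `c r s = 0` for all `r ≤ s`. -/
theorem cochain_formula_cocycle_and_coboundary
    (p : ℕ) (hp : p.Prime) (m : ℕ) (hm : 1 ≤ m)
    (A : Type*) [AddCommGroup A] (hA : ∀ a : A, p • a = 0)
    (c : Fin m → Fin m → A)
    (φ : (Fin m → ZMod p) → (Fin m → ZMod p) → A)
    (hφ : ∀ i j, φ i j =
      (∑ r, (((i r).val + (j r).val) / p) • c r r)
        - ∑ r, ∑ s ∈ Finset.Ioi r, ((j r).val * (i s).val) • c r s) :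
    ((∀ j, φ 0 j = 0) ∧ (∀ i, φ i 0 = 0) ∧
      (∀ i j k, φ j k - φ (i + j) k + φ i (j + k) - φ i j = 0)) ∧
    ((∃ f : (Fin m → ZMod p) → A, ∀ i j, φ i j = f j - f (i + j) + f i) ↔
      (∀ i j, φ i j = 0)) ∧
    ((∀ i j, φ i j = 0) ↔ ∀ r s : Fin m, r ≤ s → c r s = 0) :=
  cochain_formula_cocycle_and_coboundary_general p hp m A hA c φ hφ
end

section
/- Let G be a finite group in which every element g satisfies g^3 = 1, and suppose the commutator subgroup ⁅G,G⁆ is NOT contained in the center of G. Then the index of ⁅G,G⁆ in G is at least 27 (i.e., Nat.card (G ⧸ ⁅G,G⁆) ≥ 3^3) and the order of ⁅G,G⁆ is at least 81 (i.e., Nat.card ⁅G,G⁆ ≥ 3^4). -/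
/-!
In a group of exponent 3 any two conjugates of an element commute, so the normal closure of every
element is abelian. Hence `⁅⁅x, y⁆, y⁆ = 1`, and linearizing this Engel identity shows that
`⁅⁅x, y⁆, z⁆` changes only by inversion when two of `x, y, z` are swapped.

Index: `G` is a 3-group, hence nilpotent, so `⁅G, G⁆` lies in the Frattini subgroup. If
`G ⧸ ⁅G, G⁆` had order less than 27 it would be generated by two elements, hence so would `G`, say
by `x` and `y`; but `⁅x, y⁆` commutes with `x` and `y`, so it is central and `⁅G, G⁆` is central.

Order: pick `w = ⁅⁅a, b⁆, c⁆ ≠ 1`. The subgroups generated by `w`, then also `⁅b, c⁆`, then also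
`⁅a, c⁆`, then also `⁅a, b⁆` increase strictly inside `⁅G, G⁆`: each new generator fails to commute
with one of `a`, `b`, `c` that all the previous generators commute with.
-/

open Subgroup
open scoped commutatorElement

section General

variable {G : Type*} [Group G]

theorem Subgroup.closure_lt_closure_insert {s : Set G} {a : G} (ha : a ∉ closure s) :
    closure s < closure (insert a s) :=
  SetLike.lt_iff_le_and_exists.mpr
    ⟨closure_mono (Set.subset_insert a s), a, subset_closure (Set.mem_insert a s), ha⟩

theorem Subgroup.notMem_closure_of_commute {s : Set G} {a c : G}
    (hs : ∀ u ∈ s, Commute u c) (ha : ¬ Commute a c) : a ∉ closure s := fun h =>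
  ha (mem_centralizer_singleton_iff.mp
    ((closure_le _).mpr (fun u hu => mem_centralizer_singleton_iff.mpr (hs u hu)) h))

theorem Subgroup.mem_normalClosure_singleton_self (a : G) : a ∈ normalClosure {a} :=
  subset_normalClosure (Set.mem_singleton a)

theorem Subgroup.commutatorElement_mem_normalClosure_left {s : Set G} {u : G}
    (hu : u ∈ normalClosure s) (g : G) : ⁅u, g⁆ ∈ normalClosure s :=
  commutator_le_left _ ⊤ (commutator_mem_commutator hu (mem_top g))

theorem Subgroup.commutatorElement_mem_normalClosure_right {s : Set G} {u : G}
    (hu : u ∈ normalClosure s) (g : G) : ⁅g, u⁆ ∈ normalClosure s :=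
  commutator_le_right ⊤ _ (commutator_mem_commutator (mem_top g) hu)

theorem exists_commutatorElement_commutatorElement_ne_one
    (h : ¬ commutator G ≤ center G) : ∃ a b c : G, ⁅⁅a, b⁆, c⁆ ≠ 1 := by
  contrapose! h
  rw [_root_.commutator_def, commutator_le]
  exact fun a _ b _ => mem_center_iff.mpr fun c =>
    (commutatorElement_eq_one_iff_commute.mp (h a b c)).symm.eq

theorem commutator_le_center_of_closure_pair_eq_top {x y : G} (hxy : closure {x, y} = ⊤)
    (hc : ⁅x, y⁆ ∈ center G) : commutator G ≤ center G := by
  let f := QuotientGroup.mk' (center G)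
  have hgen : closure {f x, f y} = ⊤ := by
    rw [← Set.image_pair, ← MonoidHom.map_closure, hxy,
      map_top_of_surjective f (QuotientGroup.mk'_surjective _)]
  have hfxy : f x * f y = f y * f x := by
    rw [← commutatorElement_eq_one_iff_mul_comm, ← map_commutatorElement]
    exact (QuotientGroup.eq_one_iff _).mpr hc
  have := isMulCommutative_closure (k := {f x, f y}) (by
    rintro _ (rfl | rfl) _ (rfl | rfl) <;> first | rfl | exact hfxy | exact hfxy.symm)
  refine Normal.quotient_commutative_iff_commutator_le.mp ⟨⟨fun q r => ?_⟩⟩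
  exact setLike_mul_comm (s := closure {f x, f y}) (hgen ▸ mem_top q) (hgen ▸ mem_top r)

end General

section Nilpotent

variable {G : Type*} [Group G]

theorem commutator_le_of_isCoatom [Group.IsNilpotent G] {M : Subgroup G} (hM : IsCoatom M) :
    commutator G ≤ M := by
  have := Group.normalizerCondition_of_isNilpotent.normal_of_coatom M hM
  obtain ⟨g, -, hg⟩ := SetLike.exists_of_lt hM.lt_top
  have hsup : zpowers g ⊔ M = ⊤ :=
    hM.2 _ (lt_of_le_of_ne le_sup_right fun h => hg (h ▸ mem_sup_left (mem_zpowers g)))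
  have : IsCyclic (G ⧸ M) := isCyclic_iff_exists_zpowers_eq_top.mpr ⟨g, by
    change zpowers (QuotientGroup.mk' M g) = ⊤
    rw [← MonoidHom.map_zpowers (QuotientGroup.mk' M), ← sup_bot_eq (map _ (zpowers g)),
      ← (QuotientGroup.map_mk'_self M), ← Subgroup.map_sup, hsup,
      map_top_of_surjective _ (QuotientGroup.mk'_surjective M)]⟩
  exact Normal.quotient_commutative_iff_commutator_le.mp inferInstance

theorem commutator_le_frattini [Group.IsNilpotent G] : commutator G ≤ frattini G :=
  le_iInf₂ fun _ hM => commutator_le_of_isCoatom hM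

theorem eq_top_of_sup_commutator_eq_top [Finite G] [Group.IsNilpotent G] {H : Subgroup G}
    (h : H ⊔ commutator G = ⊤) : H = ⊤ :=
  frattini_nongenerating (top_unique (h ▸ sup_le_sup_left commutator_le_frattini H))

end Nilpotent

section PGroup

variable {G : Type*} [Group G] {p : ℕ} [Fact p.Prime]

theorem IsPGroup.prime_mul_card_le_of_lt [Finite G] (hG : IsPGroup p G) {H K : Subgroup G}
    (hHK : H < K) : p * Nat.card H ≤ Nat.card K := by
  obtain ⟨k, hk⟩ := card_dvd_of_le hHK.le
  obtain ⟨n, hn⟩ := IsPGroup.iff_card.mp (hG.to_subgroup K)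
  obtain ⟨j, -, rfl⟩ := (Nat.dvd_prime_pow Fact.out).mp (hn ▸ Dvd.intro_left _ hk.symm)
  have hj : j ≠ 0 := by
    rintro rfl
    exact hHK.ne (eq_of_le_of_card_ge hHK.le (by rw [hk, pow_zero, mul_one]))
  calc p * Nat.card H ≤ Nat.card H * p ^ j := by
        rw [mul_comm]; exact Nat.mul_le_mul_left _ (Nat.le_self_pow hj p)
    _ = Nat.card K := hk.symm

theorem IsPGroup.prime_mul_card_closure_le_of_commute [Finite G] (hG : IsPGroup p G)
    {s : Set G} {a c : G} (hs : ∀ u ∈ s, Commute u c) (ha : ¬ Commute a c) :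
    p * Nat.card (closure s) ≤ Nat.card (closure (insert a s)) :=
  hG.prime_mul_card_le_of_lt (closure_lt_closure_insert (notMem_closure_of_commute hs ha))

theorem IsPGroup.exists_closure_pair_eq_top_of_card_lt [Finite G] (hG : IsPGroup p G)
    (hcard : Nat.card G < p ^ 3) : ∃ u v : G, closure {u, v} = ⊤ := by
  by_contra! h
  have hbot : (⊥ : Subgroup G) ≠ ⊤ := by
    simpa [Set.pair_eq_singleton, closure_singleton_one] using h 1 1
  obtain ⟨v, -, hv⟩ := SetLike.exists_of_lt (lt_top_iff_ne_top.mpr hbot)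
  obtain ⟨u, -, hu⟩ := SetLike.exists_of_lt
    (lt_top_iff_ne_top.mpr (by simpa [Set.pair_eq_singleton] using h v v))
  have h1 : p * Nat.card (⊥ : Subgroup G) ≤ Nat.card (closure {v}) := hG.prime_mul_card_le_of_lt
    (SetLike.lt_iff_le_and_exists.mpr ⟨bot_le, v, mem_closure_singleton_self v, hv⟩)
  have h2 := hG.prime_mul_card_le_of_lt (closure_lt_closure_insert hu)
  have h3 := hG.prime_mul_card_le_of_lt (lt_top_iff_ne_top.mpr (h u v))
  rw [card_bot, mul_one] at h1
  rw [card_top] at h3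
  have : p ^ 3 ≤ Nat.card G := calc
    p ^ 3 = p * (p * p) := by ring
    _ ≤ p * Nat.card (closure {u, v}) := by gcongr; exact (Nat.mul_le_mul_left p h1).trans h2
    _ ≤ Nat.card G := h3
  omega

theorem IsPGroup.exists_closure_pair_eq_top_of_card_quotient_commutator_lt [Finite G]
    (hG : IsPGroup p G) (hcard : Nat.card (G ⧸ commutator G) < p ^ 3) :
    ∃ x y : G, closure {x, y} = ⊤ := by
  have := hG.isNilpotent
  obtain ⟨u, v, huv⟩ := (hG.to_quotient _).exists_closure_pair_eq_top_of_card_lt hcard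
  obtain ⟨x, rfl⟩ := QuotientGroup.mk'_surjective (commutator G) u
  obtain ⟨y, rfl⟩ := QuotientGroup.mk'_surjective (commutator G) v
  refine ⟨x, y, eq_top_of_sup_commutator_eq_top ?_⟩
  rw [← QuotientGroup.ker_mk' (commutator G), ← comap_map_eq, MonoidHom.map_closure,
    Set.image_pair, huv, comap_top]

end PGroup

namespace ExponentThree

variable {G : Type*} [Group G]

theorem isPGroup (hG : ∀ g : G, g ^ 3 = 1) : IsPGroup 3 G :=
  fun g => ⟨1, by rw [pow_one, hG]⟩

theorem commute_conj (hG : ∀ g : G, g ^ 3 = 1) (a x : G) : Commute a (x * a * x⁻¹) :=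
  -- up to cubes, both sides equal `x⁻¹ * a⁻¹ * x`
  calc a * (x * a * x⁻¹) = (a * x) ^ 3 * (x⁻¹ * a⁻¹ * x) * (x ^ 3)⁻¹ := by
        simp only [pow_three]; group
    _ = x * (a * x⁻¹) ^ 3 * x⁻¹ * x ^ 3 * (x⁻¹ * a⁻¹ * x) := by rw [hG, hG, hG]; group
    _ = x * a * x⁻¹ * a := by simp only [pow_three]; group

theorem isMulCommutative_normalClosure (hG : ∀ g : G, g ^ 3 = 1) (a : G) :
    IsMulCommutative (normalClosure {a}) := by
  refine isMulCommutative_closure ?_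
  simp only [Group.mem_conjugatesOfSet_iff, Set.mem_singleton_iff, exists_eq_left, isConj_iff]
  rintro _ ⟨g, rfl⟩ _ ⟨h, rfl⟩
  have := (commute_conj hG (g * a * g⁻¹) (h * g⁻¹)).eq
  convert this using 2 <;> group

theorem commute_of_mem_normalClosure (hG : ∀ g : G, g ^ 3 = 1) {a u v : G}
    (hu : u ∈ normalClosure {a}) (hv : v ∈ normalClosure {a}) : Commute u v :=
  have := isMulCommutative_normalClosure hG a
  setLike_mul_comm hu hv

theorem commute_of_mem_normalClosure_self (hG : ∀ g : G, g ^ 3 = 1) {a u : G}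
    (hu : u ∈ normalClosure {a}) : Commute u a :=
  commute_of_mem_normalClosure hG hu (mem_normalClosure_singleton_self a)

theorem commute_commutatorElement_left (hG : ∀ g : G, g ^ 3 = 1) (x y : G) : Commute ⁅x, y⁆ x :=
  commute_of_mem_normalClosure_self hG
    (commutatorElement_mem_normalClosure_left (mem_normalClosure_singleton_self x) y)

theorem commute_commutatorElement_right (hG : ∀ g : G, g ^ 3 = 1) (x y : G) : Commute ⁅x, y⁆ y :=
  commute_of_mem_normalClosure_self hG
    (commutatorElement_mem_normalClosure_right (mem_normalClosure_singleton_self y) x)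

theorem commutatorElement_commutatorElement_swap (hG : ∀ g : G, g ^ 3 = 1) (x y z : G) :
    ⁅⁅x, y⁆, z⁆ = ⁅⁅x, z⁆, y⁆⁻¹ := by
  have hx := mem_normalClosure_singleton_self x
  have hz := mem_normalClosure_singleton_self z
  -- linearize the Engel identity `⁅⁅x, g⁆, g⁆ = 1` at `g = y * z`
  have key : ⁅⁅x, y * z⁆, y * z⁆ = ⁅x, y⁆ * (y * (⁅⁅x, z⁆, z⁆ * (z * ⁅⁅x, z⁆, y⁆ * z⁻¹)) * y⁻¹) *
      ⁅x, y⁆⁻¹ * (⁅⁅x, y⁆, y⁆ * (y * ⁅⁅x, y⁆, z⁆ * y⁻¹)) := by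
    simp only [commutatorElement_def]; group
  have hz' : Commute ⁅⁅x, z⁆, y⁆ z := commute_of_mem_normalClosure_self hG
    (commutatorElement_mem_normalClosure_left (commutatorElement_mem_normalClosure_right hz x) y)
  have hx' : Commute ⁅x, y⁆ (y * ⁅⁅x, z⁆, y⁆ * y⁻¹) :=
    commute_of_mem_normalClosure hG (commutatorElement_mem_normalClosure_left hx y)
      (normalClosure_normal.conj_mem _ (commutatorElement_mem_normalClosure_left
        (commutatorElement_mem_normalClosure_left hx z) y) y)
  simp only [(commute_commutatorElement_right hG _ _).commutator_eq, one_mul] at key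
  rw [hz'.symm.mul_inv_cancel, hx'.mul_inv_cancel] at key
  refine (inv_eq_of_mul_eq_one_right ?_).symm
  calc ⁅⁅x, z⁆, y⁆ * ⁅⁅x, y⁆, z⁆ = y⁻¹ * (y * ⁅⁅x, z⁆, y⁆ * y⁻¹ * (y * ⁅⁅x, y⁆, z⁆ * y⁻¹)) * y := by
        group
    _ = 1 := by rw [← key]; group

theorem commutatorElement_inv_left (hG : ∀ g : G, g ^ 3 = 1) (u z : G) : ⁅u⁻¹, z⁆ = ⁅u, z⁆⁻¹ := by
  have hu : Commute u ⁅u, z⁆ := (commute_commutatorElement_left hG u z).symm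
  calc ⁅u⁻¹, z⁆ = u⁻¹ * ⁅u, z⁆⁻¹ * u⁻¹⁻¹ := by simp only [commutatorElement_def]; group
    _ = ⁅u, z⁆⁻¹ := hu.inv_right.inv_left.mul_inv_cancel

theorem commutatorElement_commutatorElement_rotate (hG : ∀ g : G, g ^ 3 = 1) (x y z : G) :
    ⁅⁅y, z⁆, x⁆ = ⁅⁅x, y⁆, z⁆ := by
  rw [commutatorElement_commutatorElement_swap hG, ← commutatorElement_inv x y,
    commutatorElement_inv_left hG, inv_inv]

theorem commutatorElement_mem_center_of_closure_pair_eq_top (hG : ∀ g : G, g ^ 3 = 1) {x y : G}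
    (hxy : closure {x, y} = ⊤) : ⁅x, y⁆ ∈ center G := by
  rw [← centralizer_univ, ← coe_top, ← hxy, centralizer_closure, mem_centralizer_iff]
  rintro _ (rfl | rfl)
  exacts [(commute_commutatorElement_left hG _ y).symm.eq,
    (commute_commutatorElement_right hG x _).symm.eq]

theorem pow_three_le_card_quotient_commutator [Finite G] (hG : ∀ g : G, g ^ 3 = 1)
    (hnc : ¬ commutator G ≤ center G) : 3 ^ 3 ≤ Nat.card (G ⧸ commutator G) := by
  have : Fact (Nat.Prime 3) := ⟨Nat.prime_three⟩
  by_contra! hlt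
  obtain ⟨x, y, hxy⟩ := (isPGroup hG).exists_closure_pair_eq_top_of_card_quotient_commutator_lt hlt
  exact hnc (commutator_le_center_of_closure_pair_eq_top hxy
    (commutatorElement_mem_center_of_closure_pair_eq_top hG hxy))

theorem pow_four_le_card_commutator [Finite G] (hG : ∀ g : G, g ^ 3 = 1) {a b c : G}
    (habc : ⁅⁅a, b⁆, c⁆ ≠ 1) : 3 ^ 4 ≤ Nat.card (commutator G) := by
  have : Fact (Nat.Prime 3) := ⟨Nat.prime_three⟩
  set x := ⁅a, b⁆
  set y := ⁅a, c⁆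
  set z := ⁅b, c⁆
  set w := ⁅x, c⁆
  have ha := mem_normalClosure_singleton_self a
  have hb := mem_normalClosure_singleton_self b
  have hwa : Commute w a := commute_of_mem_normalClosure_self hG
    (commutatorElement_mem_normalClosure_left (commutatorElement_mem_normalClosure_left ha b) c)
  have hwb : Commute w b := commute_of_mem_normalClosure_self hG
    (commutatorElement_mem_normalClosure_left (commutatorElement_mem_normalClosure_right hb a) c)
  have hwc : Commute w c := commute_commutatorElement_right hG x c
  have hzb : Commute z b := commute_commutatorElement_left hG b c
  have hzc : Commute z c := commute_commutatorElement_right hG b c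
  have hyc : Commute y c := commute_commutatorElement_right hG a c
  have hza : ¬ Commute z a := by
    rwa [← commutatorElement_eq_one_iff_commute, commutatorElement_commutatorElement_rotate hG]
  have hyb : ¬ Commute y b := by
    rwa [← commutatorElement_eq_one_iff_commute, commutatorElement_commutatorElement_swap hG,
      inv_eq_one]
  have hxc : ¬ Commute x c := by rwa [← commutatorElement_eq_one_iff_commute]
  have hp := isPGroup hG
  have h1 : 3 * Nat.card (⊥ : Subgroup G) ≤ Nat.card (closure {w}) := hp.prime_mul_card_le_of_lt
    (SetLike.lt_iff_le_and_exists.mpr ⟨bot_le, w, mem_closure_singleton_self w, habc⟩)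
  have h2 : 3 * Nat.card (closure {w}) ≤ Nat.card (closure {z, w}) :=
    hp.prime_mul_card_closure_le_of_commute (by simpa using hwa) hza
  have h3 : 3 * Nat.card (closure {z, w}) ≤ Nat.card (closure {y, z, w}) :=
    hp.prime_mul_card_closure_le_of_commute (by simp [hzb, hwb]) hyb
  have h4 : 3 * Nat.card (closure {y, z, w}) ≤ Nat.card (closure {x, y, z, w}) :=
    hp.prime_mul_card_closure_le_of_commute (by simp [hyc, hzc, hwc]) hxc
  have h5 : Nat.card (closure {x, y, z, w}) ≤ Nat.card (commutator G) := by
    refine card_le_of_le ?_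
    rw [commutator_eq_closure]
    exact closure_mono (by simp [Set.insert_subset_iff, x, y, z, w, commutator_mem_commutatorSet])
  rw [card_bot] at h1
  omega

end ExponentThree

/-- Let `G` be a finite group in which every element satisfies `g ^ 3 = 1`, and suppose the
commutator subgroup is not contained in the center. Then the index of `⁅G,G⁆` in `G` is at
least `3 ^ 3` and the order of `⁅G,G⁆` is at least `3 ^ 4`. -/
theorem exponent_three_nonabelian_action_bounds
    (G : Type*) [Group G] [Finite G]
    (hexp : ∀ g : G, g ^ 3 = 1)
    (hnc : ¬ commutator G ≤ Subgroup.center G) :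
    3 ^ 3 ≤ Nat.card (G ⧸ commutator G) ∧ 3 ^ 4 ≤ Nat.card ↥(commutator G) := by
  obtain ⟨a, b, c, habc⟩ := exists_commutatorElement_commutatorElement_ne_one hnc
  exact ⟨ExponentThree.pow_three_le_card_quotient_commutator hexp hnc,
    ExponentThree.pow_four_le_card_commutator hexp habc⟩
end
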